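/- arXiv:1209.0170 — 5 statements merged into one kernel-verified Lean document; each statement's English description precedes it below -/
import Mathlib

section
/- There exists a constant β₁ > 0, independent of the metric graph (β₁ = 6 suffices), such that the following holds. For every non-compact, connected, locally finite metric graph whose edge lengths are bounded below by some l₀ > 0, and for every nonnegative function f on the graph lying in H¹ ∩ L¹, the one-dimensional Nash inequality holds: ‖f‖_{L²}^6 ≤ β₁ · Q(f) · ‖f‖_{L¹}^4. -/
/-!
On an edge, `(f²)' = 2 f f'`, so `f²` oscillates by at most `2 ∫_e |f f'|` along `e`. Walking
through the connected graph and charging each edge at most once, `f²` at any point exceeds its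
value at any other point by at most `2 D`, `D = Σ_e ∫_e |f f'|`. As `f ∈ L²` lives on infinitely
many edges of length `≥ l₀`, `f²` takes arbitrarily small values, hence `‖f‖_∞² ≤ 2 D`. Finally
`2 D ≤ r ‖f‖₂² + Q(f) / r` for every `r > 0` (AM-GM) and `‖f‖₂² ≤ ‖f‖_∞ ‖f‖₁`; the choice
`r = ‖f‖₂² / (2 ‖f‖₁²)` gives `‖f‖₂⁶ ≤ 4 Q(f) ‖f‖₁⁴`.
-/

open MeasureTheory Set

theorem AbsolutelyContinuousOnInterval.sq_sub_sq_eq_integral {f : ℝ → ℝ} {a b : ℝ}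
    (hf : AbsolutelyContinuousOnInterval f a b) :
    f b ^ 2 - f a ^ 2 = ∫ x in a..b, 2 * (f x * deriv f x) := by
  rw [sq, sq, ← hf.integral_deriv_mul_eq_sub hf]
  congr 1 with x
  ring

lemma ContinuousOn.memLp_restrict_Ioc {f : ℝ → ℝ} {a b : ℝ} (hf : ContinuousOn f (Icc a b))
    (p : ENNReal) : MemLp f p (volume.restrict (Ioc a b)) := by
  obtain ⟨C, hC⟩ := isCompact_Icc.exists_bound_of_continuousOn hf
  exact MemLp.of_bound ((hf.mono Ioc_subset_Icc_self).aestronglyMeasurable measurableSet_Ioc) C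
    (ae_restrict_of_forall_mem measurableSet_Ioc fun x hx => hC x (Ioc_subset_Icc_self hx))

section Edge

variable {F φ : ℝ → ℝ} {L : ℝ}

lemma continuousOn_of_eq_add_integral (hφ : IntervalIntegrable φ volume 0 L)
    (hF : ∀ x ∈ Icc 0 L, F x = F 0 + ∫ u in 0..x, φ u) : ContinuousOn F (Icc 0 L) :=
  ((continuousOn_const.add
    (intervalIntegral.continuousOn_primitive_interval' hφ left_mem_uIcc)).mono Icc_subset_uIcc).congr
      hF

lemma abs_sq_sub_sq_le_of_eq_add_integral (hφ : IntervalIntegrable φ volume 0 L)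
    (hF : ∀ x ∈ Icc 0 L, F x = F 0 + ∫ u in 0..x, φ u) {x y : ℝ}
    (hx : x ∈ Icc 0 L) (hy : y ∈ Icc 0 L) (hxy : x ≤ y) :
    |F y ^ 2 - F x ^ 2| ≤ 2 * ∫ u in 0..L, |F u * φ u| := by
  have hL : uIcc 0 L = Icc 0 L := uIcc_of_le (hx.1.trans hx.2)
  set G : ℝ → ℝ := fun x => F 0 + ∫ u in 0..x, φ u
  have hG : AbsolutelyContinuousOnInterval G 0 L :=
    (LipschitzWith.const (F 0)).lipschitzOnWith.absolutelyContinuousOnInterval.add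
      (hφ.absolutelyContinuousOnInterval_intervalIntegral left_mem_uIcc)
  have hderiv : ∀ᵐ u, u ∈ uIcc 0 L → deriv G u = φ u := by
    filter_upwards [hφ.ae_hasDerivAt_integral] with u hu hu'
    exact ((hu hu' 0 left_mem_uIcc).const_add _).deriv
  have hsub : uIcc x y ⊆ Icc 0 L := by
    rw [uIcc_of_le hxy]; exact Icc_subset_Icc hx.1 hy.2
  have hGF : ∀ u ∈ Icc 0 L, G u = F u := fun u hu => (hF u hu).symm
  have heq : F y ^ 2 - F x ^ 2 = ∫ u in x..y, 2 * (F u * φ u) := by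
    rw [← hGF x hx, ← hGF y hy, (hG.mono (hL ▸ hsub)).sq_sub_sq_eq_integral]
    refine intervalIntegral.integral_congr_ae ?_
    filter_upwards [hderiv] with u hu hxyu
    have huL : u ∈ Icc 0 L := hsub (uIoc_subset_uIcc hxyu)
    rw [hu (hL ▸ huL), hGF u huL]
  have hint : IntervalIntegrable (fun u => |F u * φ u|) volume 0 L :=
    (hφ.continuousOn_mul (hL ▸ continuousOn_of_eq_add_integral hφ hF)).abs
  calc |F y ^ 2 - F x ^ 2| ≤ ∫ u in x..y, |2 * (F u * φ u)| := by
        rw [heq]; exact intervalIntegral.abs_integral_le_integral_abs hxy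
    _ = 2 * ∫ u in x..y, |F u * φ u| := by
        simp only [abs_mul, abs_two, intervalIntegral.integral_const_mul]
    _ ≤ 2 * ∫ u in 0..L, |F u * φ u| := by
        gcongr
        exact intervalIntegral.integral_mono_interval hx.1 hxy hy.2
          (ae_of_all _ fun _ => abs_nonneg _) hint

lemma sq_le_sq_add_of_eq_add_integral (hφ : IntervalIntegrable φ volume 0 L)
    (hF : ∀ x ∈ Icc 0 L, F x = F 0 + ∫ u in 0..x, φ u) {x y : ℝ}
    (hx : x ∈ Icc 0 L) (hy : y ∈ Icc 0 L) :
    F y ^ 2 ≤ F x ^ 2 + 2 * ∫ u in 0..L, |F u * φ u| := by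
  rcases le_total x y with hxy | hyx
  · linarith [le_abs_self (F y ^ 2 - F x ^ 2),
      abs_sq_sub_sq_le_of_eq_add_integral hφ hF hx hy hxy]
  · linarith [neg_abs_le (F x ^ 2 - F y ^ 2),
      abs_sq_sub_sq_le_of_eq_add_integral hφ hF hy hx hyx]

end Edge

lemma exists_le_intervalIntegral_div {f : ℝ → ℝ} {a b : ℝ} (hab : a < b)
    (hf : IntegrableOn f (Ioc a b)) : ∃ q ∈ Ioc a b, f q ≤ (∫ u in a..b, f u) / (b - a) := by
  obtain ⟨q, hq, hle⟩ := exists_le_setAverage (by simpa using hab) (by simp) hf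
  refine ⟨q, hq, hle.trans_eq ?_⟩
  rw [setAverage_eq, intervalIntegral.integral_of_le hab.le, measureReal_def, Real.volume_Ioc,
    ENNReal.toReal_ofReal (sub_nonneg.2 hab.le), smul_eq_mul, inv_mul_eq_div]

section Measure

variable {α : Type*} [MeasurableSpace α] {μ : Measure α} {f g : α → ℝ}

lemma two_mul_integral_abs_mul_le (hf : MemLp f 2 μ) (hg : MemLp g 2 μ) {r : ℝ} (hr : 0 < r) :
    2 * ∫ x, |f x * g x| ∂μ ≤ r * ∫ x, f x ^ 2 ∂μ + (∫ x, g x ^ 2 ∂μ) / r := by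
  rw [← integral_const_mul, ← integral_const_mul, ← integral_div,
    ← integral_add (hf.integrable_sq.const_mul r) (hg.integrable_sq.div_const r)]
  refine integral_mono ((hf.integrable_mul hg).abs.const_mul 2)
    ((hf.integrable_sq.const_mul r).add (hg.integrable_sq.div_const r)) fun x => ?_
  have key : 2 * |f x * g x| * r ≤ (r * f x ^ 2 + g x ^ 2 / r) * r := by
    rw [add_mul, div_mul_cancel₀ _ hr.ne', abs_mul, ← sq_abs (f x), ← sq_abs (g x)]
    nlinarith [sq_nonneg (r * |f x| - |g x|)]
  exact le_of_mul_le_mul_right key hr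

lemma integral_sq_le_sqrt_mul_integral_abs (hf : Integrable f μ) {M : ℝ}
    (hM : ∀ᵐ x ∂μ, f x ^ 2 ≤ M) : ∫ x, f x ^ 2 ∂μ ≤ √M * ∫ x, |f x| ∂μ := by
  rw [← integral_const_mul]
  refine integral_mono_of_nonneg (ae_of_all _ fun x => sq_nonneg _) (hf.abs.const_mul _) ?_
  filter_upwards [hM] with x hx
  rw [← sq_abs, sq]
  exact mul_le_mul_of_nonneg_right (Real.abs_le_sqrt hx) (abs_nonneg _)

end Measure

lemma exists_lt_of_summable_intervalIntegral {E : Type} [Infinite E] {len : E → ℝ}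
    {h : E → ℝ → ℝ} {l₀ : ℝ} (hl₀ : 0 < l₀) (hlen : ∀ e, l₀ ≤ len e)
    (hint : ∀ e, IntegrableOn (h e) (Ioc 0 (len e)))
    (hsum : Summable fun e => ∫ x in 0..len e, h e x) {ε : ℝ} (hε : 0 < ε) :
    ∃ e, ∃ q ∈ Icc 0 (len e), h e q < ε := by
  obtain ⟨e, he⟩ := (hsum.tendsto_cofinite_zero.eventually_lt_const (mul_pos hl₀ hε)).exists
  have hlen0 : 0 < len e := hl₀.trans_le (hlen e)
  obtain ⟨q, hq, hle⟩ := exists_le_intervalIntegral_div hlen0 (hint e)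
  refine ⟨e, q, Ioc_subset_Icc_self hq, hle.trans_lt ?_⟩
  rw [sub_zero, div_lt_iff₀ hlen0]
  nlinarith [hlen e]

section Graph

variable {V E : Type} {s t : E → V} {len : E → ℝ} {u : V → ℝ} {h : E → ℝ → ℝ} {k : E → ℝ}
  {m : ℝ}

def GraphAdj (s t : E → V) (a b : V) : Prop :=
  ∃ e, (s e = a ∧ t e = b) ∨ (s e = b ∧ t e = a)

/-- Growing `S` one adjacent edge at a time charges every edge at most once, so no simple paths
are needed. -/
def BoundedOnEdges (len : E → ℝ) (h : E → ℝ → ℝ) (k : E → ℝ) (m : ℝ) (S : Finset E) : Prop :=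
  ∀ i ∈ S, ∀ x ∈ Icc 0 (len i), h i x ≤ m + ∑ j ∈ S, k j

lemma BoundedOnEdges.insert [DecidableEq E] {S : Finset E} (hS : BoundedOnEdges len h k m S)
    (hk : ∀ e, 0 ≤ k e)
    (hosc : ∀ e, ∀ x ∈ Icc 0 (len e), ∀ y ∈ Icc 0 (len e), h e y ≤ h e x + k e)
    {i d : E} (hi : i ∈ S) {y z : ℝ} (hy : y ∈ Icc 0 (len d)) (hz : z ∈ Icc 0 (len i))
    (hyz : h d y = h i z) : BoundedOnEdges len h k m (insert d S) := by
  by_cases hd : d ∈ S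
  · rwa [Finset.insert_eq_of_mem hd]
  intro j hj x hx
  rw [Finset.sum_insert hd]
  rcases Finset.mem_insert.1 hj with rfl | hj
  · linarith [hosc j y hy x hx, hS i hi z hz]
  · linarith [hS j hj x hx, hk d]

lemma exists_mem_Icc_eq_of_incident (hlen : ∀ e, 0 ≤ len e) (hs : ∀ e, h e 0 = u (s e))
    (ht : ∀ e, h e (len e) = u (t e)) {e : E} {v : V} (hv : s e = v ∨ t e = v) :
    ∃ y ∈ Icc 0 (len e), h e y = u v := by
  rcases hv with rfl | rfl
  · exact ⟨0, left_mem_Icc.2 (hlen e), hs e⟩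
  · exact ⟨len e, right_mem_Icc.2 (hlen e), ht e⟩

lemma exists_boundedOnEdges_of_reflTransGen (hlen : ∀ e, 0 ≤ len e)
    (hs : ∀ e, h e 0 = u (s e)) (ht : ∀ e, h e (len e) = u (t e)) (hk : ∀ e, 0 ≤ k e)
    (hosc : ∀ e, ∀ x ∈ Icc 0 (len e), ∀ y ∈ Icc 0 (len e), h e y ≤ h e x + k e)
    {e : E} {q : ℝ} (hq : q ∈ Icc 0 (len e)) {v : V}
    (hv : Relation.ReflTransGen (GraphAdj s t) (s e) v) :
    ∃ S, BoundedOnEdges len h k (h e q) S ∧ ∃ i ∈ S, s i = v ∨ t i = v := by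
  classical
  induction hv with
  | refl =>
    refine ⟨{e}, fun i hi x hx => ?_, e, Finset.mem_singleton_self e, Or.inl rfl⟩
    obtain rfl := Finset.mem_singleton.1 hi
    rw [Finset.sum_singleton]
    exact hosc i q hq x hx
  | tail _ hvw ih =>
    obtain ⟨S, hS, i, hi, hiv⟩ := ih
    obtain ⟨d, hd⟩ := hvw
    have hdv : s d = _ ∨ t d = _ := hd.imp And.left And.right
    have hdw : s d = _ ∨ t d = _ := (hd.imp And.right And.left).symm
    obtain ⟨y, hy, hyv⟩ := exists_mem_Icc_eq_of_incident hlen hs ht hdv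
    obtain ⟨z, hz, hzv⟩ := exists_mem_Icc_eq_of_incident hlen hs ht hiv
    exact ⟨_, hS.insert hk hosc hi hy hz (hyv.trans hzv.symm), d,
      Finset.mem_insert_self d S, hdw⟩

theorem le_add_tsum_of_connected (hlen : ∀ e, 0 ≤ len e)
    (hs : ∀ e, h e 0 = u (s e)) (ht : ∀ e, h e (len e) = u (t e)) (hk : ∀ e, 0 ≤ k e)
    (hosc : ∀ e, ∀ x ∈ Icc 0 (len e), ∀ y ∈ Icc 0 (len e), h e y ≤ h e x + k e)
    (hconn : ∀ v w : V, Relation.ReflTransGen (GraphAdj s t) v w)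
    (hsum : Summable k) {e e' : E} {x q : ℝ} (hx : x ∈ Icc 0 (len e))
    (hq : q ∈ Icc 0 (len e')) : h e x ≤ h e' q + ∑' i, k i := by
  classical
  obtain ⟨S, hS, i, hi, hiv⟩ :=
    exists_boundedOnEdges_of_reflTransGen hlen hs ht hk hosc hq (hconn (s e') (s e))
  obtain ⟨y, hy, hyv⟩ := exists_mem_Icc_eq_of_incident hlen hs ht (Or.inl rfl : s e = s e ∨ _)
  obtain ⟨z, hz, hzv⟩ := exists_mem_Icc_eq_of_incident hlen hs ht hiv
  have hbound :=
    hS.insert hk hosc hi hy hz (hyv.trans hzv.symm) e (Finset.mem_insert_self e S) x hx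
  linarith [hsum.sum_le_tsum (insert e S) (fun j _ => hk j)]

end Graph

theorem sq_le_two_mul_tsum_integral_abs_mul {V E : Type} [Infinite E] {s t : E → V}
    {len : E → ℝ} {l₀ : ℝ} (hl₀ : 0 < l₀) (hlen : ∀ e, l₀ ≤ len e)
    (hconn : ∀ v w : V, Relation.ReflTransGen (GraphAdj s t) v w)
    {F φ : E → ℝ → ℝ} {g : V → ℝ} (hs : ∀ e, F e 0 = g (s e)) (ht : ∀ e, F e (len e) = g (t e))
    (hφ : ∀ e, IntervalIntegrable (φ e) volume 0 (len e))
    (hF : ∀ e, ∀ x ∈ Icc 0 (len e), F e x = F e 0 + ∫ u in 0..x, φ e u)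
    (hsumF : Summable fun e => ∫ x in 0..len e, F e x ^ 2)
    (hsumK : Summable fun e => ∫ x in 0..len e, |F e x * φ e x|) {e : E} {x : ℝ}
    (hx : x ∈ Icc 0 (len e)) :
    F e x ^ 2 ≤ 2 * ∑' e, ∫ x in 0..len e, |F e x * φ e x| := by
  have hlen0 : ∀ e, 0 ≤ len e := fun e => hl₀.le.trans (hlen e)
  refine le_of_forall_pos_le_add fun ε hε => ?_
  have hint e : IntegrableOn (fun x => F e x ^ 2) (Ioc 0 (len e)) :=
    ((continuousOn_of_eq_add_integral (hφ e) (hF e)).pow 2).integrableOn_Icc.mono_set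
      Ioc_subset_Icc_self
  obtain ⟨e', q, hq, hlt⟩ := exists_lt_of_summable_intervalIntegral hl₀ hlen hint hsumF hε
  have hosc := le_add_tsum_of_connected (h := fun e x => F e x ^ 2) (u := fun v => g v ^ 2)
    hlen0 (fun e => by rw [hs]) (fun e => by rw [ht])
    (fun e => mul_nonneg zero_le_two (intervalIntegral.integral_nonneg (hlen0 e)
      fun _ _ => abs_nonneg _))
    (fun e x hx y hy => sq_le_sq_add_of_eq_add_integral (hφ e) (hF e) hx hy) hconn
    (hsumK.mul_left 2) hx hq
  rw [tsum_mul_left] at hosc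
  linarith

lemma pow_three_le_of_sq_le_mul_sq {A B C X : ℝ} (hA : 0 ≤ A) (hB : 0 ≤ B)
    (hsq : A ^ 2 ≤ X * C ^ 2) (hX : ∀ r, 0 < r → X ≤ r * A + B / r) :
    A ^ 3 ≤ 4 * B * C ^ 4 := by
  rcases hA.eq_or_lt with rfl | hA
  · rw [zero_pow three_ne_zero]
    exact mul_nonneg (mul_nonneg zero_le_four hB) (by positivity)
  have hC : C ≠ 0 := by
    rintro rfl
    nlinarith
  have hsq' : A ^ 2 ≤ A ^ 2 / 2 + 2 * B * C ^ 4 / A :=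
    calc A ^ 2 ≤ X * C ^ 2 := hsq
      _ ≤ (A / (2 * C ^ 2) * A + B / (A / (2 * C ^ 2))) * C ^ 2 := by
          gcongr; exact hX _ (by positivity)
      _ = A ^ 2 / 2 + 2 * B * C ^ 4 / A := by field_simp
  have hcube : A ^ 3 ≤ A ^ 3 / 2 + 2 * B * C ^ 4 :=
    calc A ^ 3 = A * A ^ 2 := by ring
      _ ≤ A * (A ^ 2 / 2 + 2 * B * C ^ 4 / A) := by gcongr
      _ = A ^ 3 / 2 + 2 * B * C ^ 4 := by field_simp
  linarith

theorem tsum_pow_three_le_of_edgewise {E : Type} {a b c K : E → ℝ}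
    (ha : Summable a) (hb : Summable b) (hc : Summable c) (hK : Summable K)
    (ha0 : ∀ e, 0 ≤ a e) (hb0 : ∀ e, 0 ≤ b e) (hK0 : ∀ e, 0 ≤ K e)
    (hKab : ∀ r, 0 < r → ∀ e, 2 * K e ≤ r * a e + b e / r)
    (hac : ∀ e, a e ≤ √(2 * ∑' e, K e) * c e) :
    (∑' e, a e) ^ 3 ≤ 4 * (∑' e, b e) * (∑' e, c e) ^ 4 := by
  have hX : 0 ≤ 2 * ∑' e, K e := mul_nonneg zero_le_two (tsum_nonneg hK0)
  refine pow_three_le_of_sq_le_mul_sq (X := 2 * ∑' e, K e) (tsum_nonneg ha0) (tsum_nonneg hb0)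
    ?_ fun r hr => ?_
  · have hA : ∑' e, a e ≤ √(2 * ∑' e, K e) * ∑' e, c e := by
      rw [← tsum_mul_left]; exact ha.tsum_le_tsum hac (hc.mul_left _)
    calc (∑' e, a e) ^ 2 ≤ (√(2 * ∑' e, K e) * ∑' e, c e) ^ 2 :=
          pow_le_pow_left₀ (tsum_nonneg ha0) hA 2
      _ = (2 * ∑' e, K e) * (∑' e, c e) ^ 2 := by rw [mul_pow, Real.sq_sqrt hX]
  · rw [← tsum_mul_left, ← tsum_mul_left, ← tsum_div_const,
      ← (ha.mul_left r).tsum_add (hb.div_const r)]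
    exact (hK.mul_left 2).tsum_le_tsum (hKab r hr) ((ha.mul_left r).add (hb.div_const r))

/-- There is a constant `β₁ > 0`, independent of the metric graph
(`β₁ = 6` suffices), such that for every non-compact, connected, locally finite metric
graph with edge lengths bounded below, and every nonnegative `f ∈ H¹ ∩ L¹` on the graph,
the one-dimensional Nash inequality `‖f‖₂⁶ ≤ β₁ · Q(f) · ‖f‖₁⁴` holds.

A metric graph is given by countable vertex/edge sets `V, E`, endpoint maps `s, t`,
and edge lengths `len e ≥ l₀ > 0`.  A function on the graph is a family
`fE e : [0, len e] → ℝ` matching a vertex function `g : V → ℝ` at the endpoints;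
it is in `H¹` when each `fE e` is `H¹(0, len e)` (witnessed by the weak derivative
`fE' e`) and `Σ_e (∫ fE e² + ∫ (fE' e)²) < ∞`, and in `L¹` when `Σ_e ∫ |fE e| < ∞`.
Here `‖f‖₂² = Σ'_e ∫ (fE e)²`, `Q(f) = Σ'_e ∫ (fE' e)²`, `‖f‖₁ = Σ'_e ∫ |fE e|`. -/
theorem nash_inequality_one_dim_metric_graph :
    ∃ β₁ : ℝ, 0 < β₁ ∧ β₁ ≤ 6 ∧
      ∀ (V E : Type) (_ : Countable V) (_ : Countable E)
        (s t : E → V) (len : E → ℝ) (l₀ : ℝ),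
        0 < l₀ → (∀ e, l₀ ≤ len e) →
        -- locally finite
        (∀ v : V, {e : E | s e = v ∨ t e = v}.Finite) →
        -- connected
        (∀ v w : V,
          Relation.ReflTransGen
            (fun a b => ∃ e, (s e = a ∧ t e = b) ∨ (s e = b ∧ t e = a)) v w) →
        -- non-compact
        Infinite E →
        ∀ (fE fE' : E → ℝ → ℝ) (g : V → ℝ),
          -- continuity at the vertices
          (∀ e, fE e 0 = g (s e)) → (∀ e, fE e (len e) = g (t e)) →
          -- nonnegativity
          (∀ e, ∀ x ∈ Set.Icc (0 : ℝ) (len e), 0 ≤ fE e x) →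
          -- each edge restriction is H¹, with weak derivative fE' e ∈ L²
          (∀ e, ∀ x ∈ Set.Icc (0 : ℝ) (len e),
            fE e x = fE e 0 + ∫ u in (0 : ℝ)..x, fE' e u) →
          (∀ e, MemLp (fE' e) 2 (volume.restrict (Set.Ioc (0 : ℝ) (len e)))) →
          -- f ∈ H¹(G)
          Summable (fun e =>
            (∫ x in (0 : ℝ)..len e, (fE e x) ^ 2)
              + ∫ x in (0 : ℝ)..len e, (fE' e x) ^ 2) →
          -- f ∈ L¹(G)
          Summable (fun e => ∫ x in (0 : ℝ)..len e, |fE e x|) →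
          (∑' e, ∫ x in (0 : ℝ)..len e, (fE e x) ^ 2) ^ 3
            ≤ β₁ * (∑' e, ∫ x in (0 : ℝ)..len e, (fE' e x) ^ 2)
              * (∑' e, ∫ x in (0 : ℝ)..len e, |fE e x|) ^ 4 := by
  refine ⟨4, by norm_num, by norm_num, ?_⟩
  intro V E _ _ s t len l₀ hl₀ hlen _ hconn _ fE fE' g hs ht _ hrep hmem hH1 hL1
  have hlen0 : ∀ e, 0 ≤ len e := fun e => hl₀.le.trans (hlen e)
  have hφ : ∀ e, IntervalIntegrable (fE' e) volume 0 (len e) := fun e =>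
    (intervalIntegrable_iff_integrableOn_Ioc_of_le (hlen0 e)).2 ((hmem e).integrable one_le_two)
  have hF : ∀ e, MemLp (fE e) 2 (volume.restrict (Ioc 0 (len e))) := fun e =>
    (continuousOn_of_eq_add_integral (hφ e) (hrep e)).memLp_restrict_Ioc 2
  have hKab : ∀ r, 0 < r → ∀ e, 2 * ∫ x in 0..len e, |fE e x * fE' e x|
      ≤ r * (∫ x in 0..len e, fE e x ^ 2) + (∫ x in 0..len e, fE' e x ^ 2) / r :=
    fun r hr e => by
      simp only [intervalIntegral.integral_of_le (hlen0 e)]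
      exact two_mul_integral_abs_mul_le (hF e) (hmem e) hr
  have ha0 e : 0 ≤ ∫ x in 0..len e, fE e x ^ 2 :=
    intervalIntegral.integral_nonneg (hlen0 e) fun _ _ => sq_nonneg _
  have hb0 e : 0 ≤ ∫ x in 0..len e, fE' e x ^ 2 :=
    intervalIntegral.integral_nonneg (hlen0 e) fun _ _ => sq_nonneg _
  have hK0 e : 0 ≤ ∫ x in 0..len e, |fE e x * fE' e x| :=
    intervalIntegral.integral_nonneg (hlen0 e) fun _ _ => abs_nonneg _
  have ha := hH1.of_nonneg_of_le ha0 fun e => le_add_of_nonneg_right (hb0 e)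
  have hK := (hH1.div_const 2).of_nonneg_of_le hK0 fun e => by linarith [hKab 1 one_pos e]
  refine tsum_pow_three_le_of_edgewise ha (hH1.of_nonneg_of_le hb0 fun e =>
    le_add_of_nonneg_left (ha0 e)) hL1 hK ha0 hb0 hK0 hKab fun e => ?_
  simp only [intervalIntegral.integral_of_le (hlen0 e)]
  exact integral_sq_le_sqrt_mul_integral_abs ((hF e).integrable one_le_two)
    (ae_restrict_of_forall_mem measurableSet_Ioc fun x hx => sq_le_two_mul_tsum_integral_abs_mul
      hl₀ hlen hconn hs ht hφ hrep ha hK (Ioc_subset_Icc_self hx))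
end

section
/- If f : [0,l] → ℝ is measurable, nonnegative and square-integrable, and k ≥ 0, then ∫_Δ F(x,y)² dxdy ≥ (r/4)·∫₀^l f(x)² dx. -/
/-!
The slice of the triangle at height `y` is the base `[0, l]` contracted by the factor `1 - y/r` and
shifted; let `x₀(x, y)` be the base point sent to `(x, y)`. Substituting slice by slice (Fubini)
gives `∫_Δ φ(y) h(x₀) = (∫₀ʳ φ(y) (1 - y/r) dy) (∫₀ˡ h)`. On the triangle
`F = (1 - y/r) f(x₀) + k y / r` is a sum of two nonnegative terms, so `F² ≥ (1 - y/r)² f(x₀)²`,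
whose integral is `(∫₀ʳ (1 - y/r)³ dy) ∫₀ˡ f² = (r/4) ∫₀ˡ f²`. The same formula shows that `F²`,
being at most `2 (1 - y/r)² f(x₀)² + 2 (k y / r)²`, is integrable on the triangle.
-/

open MeasureTheory

/-- The closed triangle with vertices `(0,0)`, `(l,0)`, `(d,r)`:
`Δ = {(x,y) : 0 ≤ y ≤ r and (d/r)·y ≤ x ≤ l − ((l−d)/r)·y}`. -/
def triangleSet (r l d : ℝ) : Set (ℝ × ℝ) :=
  {p : ℝ × ℝ | 0 ≤ p.2 ∧ p.2 ≤ r ∧ (d / r) * p.2 ≤ p.1 ∧ p.1 ≤ l - ((l - d) / r) * p.2}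

/-- The extension `F` of `f : [0,l] → ℝ` to the triangle `Δ`:
`F(x,y) = (1 − y/r)·f((x − (d/r)y)/(1 − y/r)) + (k/r)·y` for `y < r`, and `F(x,r) = k`. -/
noncomputable def triangleExt (r d k : ℝ) (f : ℝ → ℝ) (p : ℝ × ℝ) : ℝ :=
  if p.2 = r then k
  else (1 - p.2 / r) * f ((p.1 - (d / r) * p.2) / (1 - p.2 / r)) + (k / r) * p.2

open Set

section AffineSubstitution

variable {h : ℝ → ℝ} {a s l : ℝ}

theorem setIntegral_Icc_comp_sub_div (hs : 0 ≤ s) (hl : 0 ≤ l) :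
    ∫ x in Icc a (a + l * s), h ((x - a) / s) = s * ∫ x in (0 : ℝ)..l, h x := by
  rcases hs.eq_or_lt with rfl | hs
  · simp
  rw [integral_Icc_eq_integral_Ioc, ← intervalIntegral.integral_of_le (by nlinarith)]
  simp only [sub_div]
  rw [intervalIntegral.integral_comp_div_sub h hs.ne', smul_eq_mul]
  congr 2 <;> field_simp <;> ring

theorem integrableOn_Icc_comp_sub_div (hs : 0 ≤ s) (hl : 0 ≤ l)
    (hh : IntervalIntegrable h volume 0 l) :
    IntegrableOn (fun x => h ((x - a) / s)) (Icc a (a + l * s)) := by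
  rcases hs.eq_or_lt with rfl | hs
  · simp
  rw [← intervalIntegrable_iff_integrableOn_Icc_of_le (by nlinarith)]
  convert (hh.comp_mul_left (c := s⁻¹)).comp_sub_right a using 1
  · ext x; field_simp
  · simp
  · field_simp; ring

end AffineSubstitution

/-- The point of the base `[0, l]` sent to `p` by the affine contraction of the base onto the
horizontal slice of `triangleSet r l d` through `p`. -/
noncomputable def triangleBase (r d : ℝ) (p : ℝ × ℝ) : ℝ :=
  (p.1 - d / r * p.2) / (1 - p.2 / r)

section Triangle

variable {r l d : ℝ}

theorem measurable_triangleBase : Measurable (triangleBase r d) := by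
  unfold triangleBase; fun_prop

theorem measurableSet_triangleSet : MeasurableSet (triangleSet r l d) := by
  unfold triangleSet; measurability

theorem mem_triangleSet_iff {p : ℝ × ℝ} : p ∈ triangleSet r l d ↔
    p.2 ∈ Icc 0 r ∧ p.1 ∈ Icc (d / r * p.2) (d / r * p.2 + l * (1 - p.2 / r)) := by
  rw [show l * (1 - p.2 / r) = l - (l - d) / r * p.2 - d / r * p.2 by ring]
  simp only [triangleSet, mem_ofPred_eq, mem_Icc, add_sub_cancel]
  tauto

theorem triangleBase_mem_Icc {p : ℝ × ℝ} (hp : p ∈ triangleSet r l d) (hw : 0 < 1 - p.2 / r) :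
    triangleBase r d p ∈ Icc 0 l := by
  obtain ⟨-, hx₀, hx₁⟩ := mem_triangleSet_iff.1 hp
  exact ⟨div_nonneg (sub_nonneg.2 hx₀) hw.le, (div_le_iff₀ hw).2 (by linarith)⟩

/-- At the apex height `p.2 = r` the first summand vanishes whatever the junk value of
`triangleBase r d p`, so the formula holds on all of `ℝ × ℝ`. -/
theorem triangleExt_eq (hr : r ≠ 0) (k : ℝ) (f : ℝ → ℝ) (p : ℝ × ℝ) :
    triangleExt r d k f p = (1 - p.2 / r) * f (triangleBase r d p) + k / r * p.2 := by
  unfold triangleExt triangleBase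
  split_ifs with h
  · simp [h, hr]
  · rfl

theorem indicator_triangleSet_apply (G : ℝ × ℝ → ℝ) (x y : ℝ) :
    (triangleSet r l d).indicator G (x, y) = if y ∈ Icc 0 r then
      (Icc (d / r * y) (d / r * y + l * (1 - y / r))).indicator (fun x => G (x, y)) x else 0 := by
  classical
  rw [indicator_apply, mem_triangleSet_iff]
  by_cases hy : y ∈ Icc 0 r <;> simp [indicator_apply, hy]

variable {φ h : ℝ → ℝ}

theorem integral_indicator_triangleSet_slice (hr : 0 < r) (hl : 0 ≤ l) (y : ℝ) :
    ∫ x, (triangleSet r l d).indicator (fun p => φ p.2 * h (triangleBase r d p)) (x, y) =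
      (Icc 0 r).indicator (fun y => φ y * (1 - y / r)) y * ∫ x in (0 : ℝ)..l, h x := by
  simp_rw [indicator_triangleSet_apply, triangleBase]
  split_ifs with hy
  · have hw : 0 ≤ 1 - y / r := sub_nonneg.2 ((div_le_one hr).2 hy.2)
    rw [integral_indicator measurableSet_Icc, integral_const_mul,
      setIntegral_Icc_comp_sub_div hw hl, indicator_of_mem hy, mul_assoc]
  · rw [integral_zero, indicator_of_notMem hy, zero_mul]

theorem integrable_indicator_triangleSet_slice (hr : 0 < r) (hl : 0 ≤ l)
    (hh : IntervalIntegrable h volume 0 l) (y : ℝ) :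
    Integrable fun x =>
      (triangleSet r l d).indicator (fun p => φ p.2 * h (triangleBase r d p)) (x, y) := by
  simp_rw [indicator_triangleSet_apply, triangleBase]
  split_ifs with hy
  · have hw : 0 ≤ 1 - y / r := sub_nonneg.2 ((div_le_one hr).2 hy.2)
    exact IntegrableOn.integrable_indicator
      ((integrableOn_Icc_comp_sub_div hw hl hh).const_mul _) measurableSet_Icc
  · exact integrable_zero _ _ _

theorem integrableOn_triangleSet (hr : 0 < r) (hl : 0 ≤ l) (hφ : Continuous φ)
    (hh : Measurable h) (hhi : IntervalIntegrable h volume 0 l) :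
    IntegrableOn (fun p => φ p.2 * h (triangleBase r d p)) (triangleSet r l d) := by
  rw [← integrable_indicator_iff measurableSet_triangleSet, Measure.volume_eq_prod]
  refine (integrable_prod_iff' ?_).2
    ⟨.of_forall (integrable_indicator_triangleSet_slice hr hl hhi), ?_⟩
  · exact (((hφ.measurable.comp measurable_snd).mul (hh.comp measurable_triangleBase)).indicator
      measurableSet_triangleSet).aestronglyMeasurable
  · simp_rw [norm_indicator_eq_indicator_norm, norm_mul, Real.norm_eq_abs,
      integral_indicator_triangleSet_slice (φ := fun y => |φ y|) (h := fun x => |h x|) hr hl]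
    have hw : Continuous fun y => |φ y| * (1 - y / r) := by fun_prop
    exact (hw.integrableOn_Icc.integrable_indicator measurableSet_Icc).mul_const _

theorem setIntegral_triangleSet (hr : 0 < r) (hl : 0 ≤ l) (hφ : Continuous φ)
    (hh : Measurable h) (hhi : IntervalIntegrable h volume 0 l) :
    ∫ p in triangleSet r l d, φ p.2 * h (triangleBase r d p) =
      (∫ y in (0 : ℝ)..r, φ y * (1 - y / r)) * ∫ x in (0 : ℝ)..l, h x := by
  have hint := (integrable_indicator_iff measurableSet_triangleSet).2
    (integrableOn_triangleSet (d := d) hr hl hφ hh hhi)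
  rw [← integral_indicator measurableSet_triangleSet, Measure.volume_eq_prod,
    integral_prod_symm _ hint]
  simp_rw [integral_indicator_triangleSet_slice hr hl]
  rw [integral_mul_const, integral_indicator measurableSet_Icc, integral_Icc_eq_integral_Ioc,
    ← intervalIntegral.integral_of_le hr.le]

end Triangle

theorem integral_one_sub_div_pow {r : ℝ} (hr : r ≠ 0) (n : ℕ) :
    ∫ y in (0 : ℝ)..r, (1 - y / r) ^ n = r / (n + 1) := by
  rw [intervalIntegral.integral_comp_sub_div (fun x => x ^ n) hr, integral_pow]
  rw [zero_div, sub_zero, div_self hr, sub_self, one_pow, zero_pow n.succ_ne_zero, sub_zero,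
    smul_eq_mul]
  field_simp

section TriangleExt

variable {r l d k : ℝ} {f : ℝ → ℝ}

theorem integrableOn_triangleExt_sq (hr : 0 < r) (hl : 0 ≤ l) (hf : Measurable f)
    (hf₂ : IntervalIntegrable (fun x => f x ^ 2) volume 0 l) :
    IntegrableOn (fun p => triangleExt r d k f p ^ 2) (triangleSet r l d) := by
  have hA := integrableOn_triangleSet (d := d) (φ := fun y => (1 - y / r) ^ 2) hr hl
    (by fun_prop) (hf.pow_const 2) hf₂
  have hB := integrableOn_triangleSet (d := d) (φ := fun y => (k / r * y) ^ 2) (h := fun _ => 1)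
    hr hl (by fun_prop) measurable_const intervalIntegrable_const
  refine ((hA.const_mul 2).add (hB.const_mul 2)).mono' ?_ (.of_forall fun p => ?_)
  · simp_rw [triangleExt_eq hr.ne']
    exact ((((measurable_const.sub (measurable_snd.div_const r)).mul
      (hf.comp measurable_triangleBase)).add (measurable_snd.const_mul _)).pow_const
        2).aestronglyMeasurable
  · rw [Real.norm_of_nonneg (sq_nonneg _), triangleExt_eq hr.ne', Pi.add_apply, mul_one,
      ← mul_pow]
    linarith [add_sq_le (a := (1 - p.2 / r) * f (triangleBase r d p)) (b := k / r * p.2)]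

theorem sq_le_triangleExt_sq (hr : 0 < r) (hf : ∀ x ∈ Icc 0 l, 0 ≤ f x) (hk : 0 ≤ k)
    {p : ℝ × ℝ} (hp : p ∈ triangleSet r l d) :
    (1 - p.2 / r) ^ 2 * f (triangleBase r d p) ^ 2 ≤ triangleExt r d k f p ^ 2 := by
  obtain ⟨⟨hy₀, hyr⟩, -⟩ := mem_triangleSet_iff.1 hp
  have hA : 0 ≤ (1 - p.2 / r) * f (triangleBase r d p) := by
    rcases (sub_nonneg.2 ((div_le_one hr).2 hyr)).eq_or_lt with hw | hw
    · rw [← hw, zero_mul]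
    · exact mul_nonneg hw.le (hf _ (triangleBase_mem_Icc hp hw))
  rw [triangleExt_eq hr.ne', ← mul_pow]
  exact pow_le_pow_left₀ hA (le_add_of_nonneg_right (mul_nonneg (div_nonneg hk hr.le) hy₀)) 2

end TriangleExt

theorem triangleExt_sq_integral_lower_bound_general (r l d : ℝ) (hr : 0 < r) (hl : 0 < l)
    (f : ℝ → ℝ) (hf_meas : Measurable f)
    (hf_nonneg : ∀ x ∈ Set.Icc (0 : ℝ) l, 0 ≤ f x)
    (hf_sq : MemLp f 2 (volume.restrict (Set.Ioc (0 : ℝ) l)))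
    (k : ℝ) (hk : 0 ≤ k) :
    r / 4 * ∫ x in (0 : ℝ)..l, (f x) ^ 2
      ≤ ∫ p in triangleSet r l d, (triangleExt r d k f p) ^ 2 := by
  have hf₂ : IntervalIntegrable (fun x => f x ^ 2) volume 0 l :=
    (intervalIntegrable_iff_integrableOn_Ioc_of_le hl.le).2 hf_sq.integrable_sq
  calc r / 4 * ∫ x in (0 : ℝ)..l, f x ^ 2
      = ∫ p in triangleSet r l d, (1 - p.2 / r) ^ 2 * f (triangleBase r d p) ^ 2 := by
        rw [setIntegral_triangleSet (φ := fun y => (1 - y / r) ^ 2) hr hl.le (by fun_prop)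
          (hf_meas.pow_const 2) hf₂]
        simp_rw [← pow_succ, integral_one_sub_div_pow hr.ne']
        norm_num
    _ ≤ ∫ p in triangleSet r l d, triangleExt r d k f p ^ 2 :=
        setIntegral_mono_on
          (integrableOn_triangleSet (φ := fun y => (1 - y / r) ^ 2) hr hl.le (by fun_prop)
            (hf_meas.pow_const 2) hf₂)
          (integrableOn_triangleExt_sq hr hl.le hf_meas hf₂) measurableSet_triangleSet
          fun p hp => sq_le_triangleExt_sq hr hf_nonneg hk hp

/-- If `f : [0,l] → ℝ` is measurable, nonnegative and square-integrable,
and `k ≥ 0`, then `∫_Δ F(x,y)² dxdy ≥ (r/4)·∫₀ˡ f(x)² dx`. -/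
theorem triangleExt_sq_integral_lower_bound (r l d : ℝ) (hr : 0 < r) (hl : 0 < l)
    (hd0 : 0 ≤ d) (hdl : d ≤ l) (f : ℝ → ℝ) (hf_meas : Measurable f)
    (hf_nonneg : ∀ x ∈ Set.Icc (0 : ℝ) l, 0 ≤ f x)
    (hf_sq : MemLp f 2 (volume.restrict (Set.Ioc (0 : ℝ) l)))
    (k : ℝ) (hk : 0 ≤ k) :
    r / 4 * ∫ x in (0 : ℝ)..l, (f x) ^ 2
      ≤ ∫ p in triangleSet r l d, (triangleExt r d k f p) ^ 2 :=
  triangleExt_sq_integral_lower_bound_general r l d hr hl f hf_meas hf_nonneg hf_sq k hk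
end

section
/- If f : [0,l] → ℝ is integrable, then ∫_Δ F(x,y) dxdy = (r/3)·∫₀^l f(x) dx + (1/6)·l·k·r. In particular, if f ≥ 0 and 0 ≤ k ≤ (∫₀^l f)/l, then ∫_Δ |F(x,y)| dxdy ≤ (r/2)·∫₀^l f(x) dx. -/
/-!
The map `(u, y) ↦ ((d/r)·y + (1 - y/r)·u, y)` sends `[0,l] × [0,r)` bijectively onto the
triangle minus its apex `(d,r)`, with Jacobian `1 - y/r`, and it pulls `F` back to
`(1 - y/r)·f(u) + (k/r)·y`. Hence `∫_Δ F = ∫∫ ((1 - y/r)²·f(u) + k·(1 - y/r)·(y/r))`, which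
separates into `(r/3)·∫f + (l·k·r)/6`. When `f, k ≥ 0` the pullback is nonnegative, so `|F|` has
the same integral, and `l·k ≤ ∫f` turns `(l·k·r)/6` into at most `(r/6)·∫f`.
-/
open MeasureTheory

theorem setIntegral_prod_mul_add {α β : Type*} [MeasurableSpace α] [MeasurableSpace β]
    {μ : Measure α} {ν : Measure β} [SFinite μ] [SFinite ν] {s : Set α} {t : Set β}
    (hs : μ s ≠ ⊤) {f : α → ℝ} {g h : β → ℝ} (hf : IntegrableOn f s μ)
    (hg : IntegrableOn g t ν) (hh : IntegrableOn h t ν) :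
    ∫ z in s ×ˢ t, (f z.1 * g z.2 + h z.2) ∂μ.prod ν
      = (∫ x in s, f x ∂μ) * (∫ y in t, g y ∂ν) + μ.real s * ∫ y in t, h y ∂ν := by
  have hfg : IntegrableOn (fun z : α × β => f z.1 * g z.2) (s ×ˢ t) (μ.prod ν) := by
    rw [IntegrableOn, ← Measure.prod_restrict]; exact hf.mul_prod hg
  have hh' : IntegrableOn (fun z : α × β => h z.2) (s ×ˢ t) (μ.prod ν) := by
    rw [IntegrableOn, ← Measure.prod_restrict]
    simpa using Integrable.mul_prod (integrableOn_const (C := (1 : ℝ)) hs) hh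
  have hconst : ∫ z in s ×ˢ t, h z.2 ∂μ.prod ν = μ.real s * ∫ y in t, h y ∂ν := by
    simpa using setIntegral_prod_mul (μ := μ) (ν := ν) (fun _ => (1 : ℝ)) h s t
  rw [integral_add hfg hh', setIntegral_prod_mul, hconst]

theorem one_sub_div_ne_zero {K : Type*} [DivisionRing K] {y r : K} (hy : y ≠ r) :
    1 - y / r ≠ 0 := by
  rcases eq_or_ne r 0 with rfl | hr
  · simp
  · rwa [sub_ne_zero, ne_comm, ne_eq, div_eq_one_iff_eq hr]

theorem one_sub_div_pos {y r : ℝ} (hr : 0 < r) (hy : y < r) : 0 < 1 - y / r :=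
  sub_pos.2 ((div_lt_one hr).2 hy)

theorem integral_one_sub_div_sq {r : ℝ} (hr : r ≠ 0) :
    ∫ y in (0 : ℝ)..r, (1 - y / r) ^ 2 = r / 3 := by
  rw [intervalIntegral.integral_comp_div (fun t => (1 - t) ^ 2) hr,
    intervalIntegral.integral_comp_sub_left (fun t => t ^ 2)]
  norm_num [integral_pow, hr]
  ring

theorem integral_one_sub_div_mul_div {r : ℝ} (hr : r ≠ 0) :
    ∫ y in (0 : ℝ)..r, (1 - y / r) * (y / r) = r / 6 := by
  rw [intervalIntegral.integral_comp_div (fun t => (1 - t) * t) hr]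
  simp only [one_sub_mul, ← sq]
  rw [intervalIntegral.integral_sub
    ((by fun_prop : Continuous fun t : ℝ => t).intervalIntegrable _ _)
    ((continuous_pow 2).intervalIntegrable _ _)]
  norm_num [integral_pow, hr]
  ring

noncomputable section

variable (r d : ℝ)

def triangleParam (p : ℝ × ℝ) : ℝ × ℝ := ((d / r) * p.2 + (1 - p.2 / r) * p.1, p.2)

def triangleParamDeriv (p : ℝ × ℝ) : ℝ × ℝ →L[ℝ] ℝ × ℝ :=
  ((1 - p.2 / r) • ContinuousLinearMap.fst ℝ ℝ ℝ
    + ((d - p.1) / r) • ContinuousLinearMap.snd ℝ ℝ ℝ).prod (ContinuousLinearMap.snd ℝ ℝ ℝ)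

theorem hasFDerivAt_triangleParam (p : ℝ × ℝ) :
    HasFDerivAt (triangleParam r d) (triangleParamDeriv r d p) p := by
  have hfst : HasFDerivAt (fun q : ℝ × ℝ => d / r * q.2 + (1 - q.2 / r) * q.1) _ p :=
    (hasFDerivAt_snd.const_mul (d / r)).add
      (((hasFDerivAt_const 1 p).sub (hasFDerivAt_snd.mul_const r⁻¹)).mul
        (hasFDerivAt_fst (𝕜 := ℝ) (p := p)))
  refine (hfst.prodMk hasFDerivAt_snd).congr_fderiv ?_
  ext <;> simp [triangleParamDeriv] <;> ring

theorem det_triangleParamDeriv (p : ℝ × ℝ) : (triangleParamDeriv r d p).det = 1 - p.2 / r := by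
  rw [ContinuousLinearMap.det, ← LinearMap.det_toMatrix (Module.Basis.finTwoProd ℝ),
    Matrix.det_fin_two]
  simp [LinearMap.toMatrix_apply, triangleParamDeriv]

theorem injOn_triangleParam : Set.InjOn (triangleParam r d) {p | p.2 ≠ r} := by
  rintro ⟨u, y⟩ hy ⟨u', y'⟩ - h
  simp only [triangleParam, Prod.mk.injEq] at h
  obtain ⟨h1, rfl⟩ := h
  have hu : u = u' := mul_left_cancel₀ (one_sub_div_ne_zero hy) (by linarith)
  rw [hu]

theorem triangleExt_triangleParam (k : ℝ) (f : ℝ → ℝ) {p : ℝ × ℝ} (hp : p.2 ≠ r) :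
    triangleExt r d k f (triangleParam r d p) = (1 - p.2 / r) * f p.1 + k / r * p.2 := by
  simp only [triangleExt, triangleParam, if_neg hp, add_sub_cancel_left,
    mul_div_cancel_left₀ _ (one_sub_div_ne_zero hp)]

theorem triangleParam_image_Icc_prod_Ico {l : ℝ} (hr : 0 < r) :
    triangleParam r d '' (Set.Icc 0 l ×ˢ Set.Ico 0 r) = triangleSet r l d \ {(d, r)} := by
  ext ⟨x, y⟩
  simp only [Set.mem_image, Set.mem_prod, Set.mem_Icc, Set.mem_Ico, Set.mem_sdiff,
    Set.mem_singleton_iff, triangleSet, Set.mem_ofPred_eq, triangleParam, Prod.mk.injEq,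
    Prod.exists]
  constructor
  · rintro ⟨u, y, ⟨⟨hu0, hul⟩, hy0, hyr⟩, rfl, rfl⟩
    have ht := one_sub_div_pos hr hyr
    have hright : d / r * y + (1 - y / r) * l = l - (l - d) / r * y := by field_simp; ring
    exact ⟨⟨hy0, hyr.le, by nlinarith, by nlinarith⟩, fun h => hyr.ne h.2⟩
  · rintro ⟨⟨hy0, hyr, hx1, hx2⟩, hne⟩
    have hyr' : y < r := by
      refine hyr.lt_of_ne ?_
      rintro rfl
      rw [div_mul_cancel₀ _ hr.ne'] at hx1 hx2
      exact hne ⟨by linarith, rfl⟩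
    have ht := one_sub_div_pos hr hyr'
    refine ⟨(x - d / r * y) / (1 - y / r), y, ⟨⟨?_, ?_⟩, hy0, hyr'⟩, ?_, rfl⟩
    · exact div_nonneg (by linarith) ht.le
    · rw [div_le_iff₀ ht]
      have hkey : l * (1 - y / r) = l - (l - d) / r * y - (d / r) * y := by field_simp; ring
      linarith
    · rw [mul_div_cancel₀ _ ht.ne']; ring

theorem setIntegral_triangleSet_s3 {E : Type*} [NormedAddCommGroup E] [NormedSpace ℝ E]
    {l : ℝ} (hr : 0 < r) (g : ℝ × ℝ → E) :
    ∫ p in triangleSet r l d, g p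
      = ∫ p in Set.Icc 0 l ×ˢ Set.Ico 0 r, (1 - p.2 / r) • g (triangleParam r d p) := by
  have hrect : MeasurableSet (Set.Icc (0 : ℝ) l ×ˢ Set.Ico 0 r) :=
    measurableSet_Icc.prod measurableSet_Ico
  have hcov := integral_image_eq_integral_abs_det_fderiv_smul volume hrect
    (fun p _ => (hasFDerivAt_triangleParam r d p).hasFDerivWithinAt)
    ((injOn_triangleParam r d).mono fun p hp => hp.2.2.ne) g
  have hapex : volume ({(d, r)} : Set (ℝ × ℝ)) = 0 := measure_singleton _
  rw [triangleParam_image_Icc_prod_Ico r d hr,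
    setIntegral_congr_set (sdiff_ae_eq_self.2 (measure_mono_null Set.inter_subset_right hapex))]
    at hcov
  rw [hcov]
  refine setIntegral_congr_fun hrect fun p hp => ?_
  rw [det_triangleParamDeriv, abs_of_pos (one_sub_div_pos hr hp.2.2)]

theorem setIntegral_comp_triangleExt {l : ℝ} (hr : 0 < r) (k : ℝ) (f : ℝ → ℝ) (φ : ℝ → ℝ) :
    ∫ p in triangleSet r l d, φ (triangleExt r d k f p)
      = ∫ p in Set.Icc 0 l ×ˢ Set.Ico 0 r,
          (1 - p.2 / r) * φ ((1 - p.2 / r) * f p.1 + k / r * p.2) := by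
  rw [setIntegral_triangleSet_s3 r d hr]
  exact setIntegral_congr_fun (measurableSet_Icc.prod measurableSet_Ico) fun p hp => by
    rw [triangleExt_triangleParam r d k f hp.2.2.ne, smul_eq_mul]

end

theorem setIntegral_pullback_triangleExt {r l : ℝ} (hr : 0 < r) (hl : 0 ≤ l) {f : ℝ → ℝ}
    (hf : IntegrableOn f (Set.Icc 0 l)) (k : ℝ) :
    ∫ p in Set.Icc 0 l ×ˢ Set.Ico 0 r, (1 - p.2 / r) * ((1 - p.2 / r) * f p.1 + k / r * p.2)
      = r / 3 * (∫ x in (0 : ℝ)..l, f x) + 1 / 6 * l * k * r := by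
  have hIco (g : ℝ → ℝ) : ∫ y in Set.Ico 0 r, g y = ∫ y in (0 : ℝ)..r, g y := by
    rw [integral_Ico_eq_integral_Ioc, intervalIntegral.integral_of_le hr.le]
  calc _ = ∫ p in Set.Icc 0 l ×ˢ Set.Ico 0 r,
          (f p.1 * (1 - p.2 / r) ^ 2 + k * ((1 - p.2 / r) * (p.2 / r))) :=
        integral_congr_ae (.of_forall fun p => by ring)
    _ = (∫ x in Set.Icc 0 l, f x) * (∫ y in Set.Ico 0 r, (1 - y / r) ^ 2)
          + volume.real (Set.Icc 0 l) * ∫ y in Set.Ico 0 r, k * ((1 - y / r) * (y / r)) := by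
        rw [Measure.volume_eq_prod]
        have hIco_integrable {g : ℝ → ℝ} (hg : Continuous g) : IntegrableOn g (Set.Ico 0 r) :=
          hg.integrableOn_Icc.mono_set Set.Ico_subset_Icc_self
        exact setIntegral_prod_mul_add (measure_Icc_lt_top (a := (0 : ℝ)) (b := l)).ne hf
          (hIco_integrable (g := fun y => (1 - y / r) ^ 2) (by fun_prop))
          (hIco_integrable (g := fun y => k * ((1 - y / r) * (y / r))) (by fun_prop))
    _ = _ := by
        rw [hIco, hIco, integral_Icc_eq_integral_Ioc, ← intervalIntegral.integral_of_le hl,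
          intervalIntegral.integral_const_mul, integral_one_sub_div_sq hr.ne',
          integral_one_sub_div_mul_div hr.ne', Real.volume_real_Icc_of_le hl]
        ring

theorem triangleExt_integral_eq_and_L1_bound_general (r l d : ℝ) (hr : 0 < r) (hl : 0 < l)
    (f : ℝ → ℝ)
    (hf_int : IntegrableOn f (Set.Icc (0 : ℝ) l)) (k : ℝ) :
    (∫ p in triangleSet r l d, triangleExt r d k f p)
        = r / 3 * (∫ x in (0 : ℝ)..l, f x) + 1 / 6 * l * k * r
      ∧ ((∀ x ∈ Set.Icc (0 : ℝ) l, 0 ≤ f x) → 0 ≤ k → k ≤ (∫ x in (0 : ℝ)..l, f x) / l →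
          ∫ p in triangleSet r l d, |triangleExt r d k f p|
            ≤ r / 2 * ∫ x in (0 : ℝ)..l, f x) := by
  have hint : ∫ p in triangleSet r l d, triangleExt r d k f p
      = r / 3 * (∫ x in (0 : ℝ)..l, f x) + 1 / 6 * l * k * r :=
    (setIntegral_comp_triangleExt r d hr k f id).trans
      (setIntegral_pullback_triangleExt hr hl.le hf_int k)
  refine ⟨hint, fun hf0 hk0 hkI => ?_⟩
  have habs : ∫ p in triangleSet r l d, |triangleExt r d k f p|
      = r / 3 * (∫ x in (0 : ℝ)..l, f x) + 1 / 6 * l * k * r := by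
    rw [setIntegral_comp_triangleExt r d hr k f abs,
      ← setIntegral_pullback_triangleExt hr hl.le hf_int k]
    refine setIntegral_congr_fun (measurableSet_Icc.prod measurableSet_Ico) fun p hp => ?_
    have hF : 0 ≤ (1 - p.2 / r) * f p.1 + k / r * p.2 :=
      add_nonneg (mul_nonneg (one_sub_div_pos hr hp.2.2).le (hf0 _ hp.1))
        (mul_nonneg (div_nonneg hk0 hr.le) hp.2.1)
    rw [abs_of_nonneg hF]
  have hlk : l * k ≤ ∫ x in (0 : ℝ)..l, f x := by rwa [mul_comm, ← le_div_iff₀ hl]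
  rw [habs]
  linarith [mul_le_mul_of_nonneg_left hlk hr.le]

/-- If `f : [0,l] → ℝ` is integrable, then
`∫_Δ F(x,y) dxdy = (r/3)·∫₀ˡ f(x) dx + (1/6)·l·k·r`; and if moreover `f ≥ 0` and
`0 ≤ k ≤ (∫₀ˡ f)/l`, then `∫_Δ |F(x,y)| dxdy ≤ (r/2)·∫₀ˡ f(x) dx`. -/
theorem triangleExt_integral_eq_and_L1_bound (r l d : ℝ) (hr : 0 < r) (hl : 0 < l)
    (hd0 : 0 ≤ d) (hdl : d ≤ l) (f : ℝ → ℝ)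
    (hf_int : IntegrableOn f (Set.Icc (0 : ℝ) l)) (k : ℝ) :
    (∫ p in triangleSet r l d, triangleExt r d k f p)
        = r / 3 * (∫ x in (0 : ℝ)..l, f x) + 1 / 6 * l * k * r
      ∧ ((∀ x ∈ Set.Icc (0 : ℝ) l, 0 ≤ f x) → 0 ≤ k → k ≤ (∫ x in (0 : ℝ)..l, f x) / l →
          ∫ p in triangleSet r l d, |triangleExt r d k f p|
            ≤ r / 2 * ∫ x in (0 : ℝ)..l, f x) :=
  triangleExt_integral_eq_and_L1_bound_general r l d hr hl f hf_int k
end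

section
/- Let L > 0 and let f : ℝ → ℝ be L-periodic, continuous and locally absolutely continuous with derivative f' ∈ L²(0,L), and let k = min f (the minimum of f over one period, which is attained). Then ∫₀^L f(x)² dx − 2k·∫₀^L f(x) dx + k²·L ≤ (L²/8)·∫₀^L (f'(x))² dx. -/
/-!
Put `g = f - f z` for a point `z` with `f z = k`; then `g` vanishes at both ends of the period
`[z, z + L]`. On each half of that period, Cauchy–Schwarz from the end where `g` vanishes gives
`g x ^ 2 ≤ |x - end| * ∫_half g' ^ 2`, and integrating over the half (of length `L / 2`) gives
the factor `(L / 2) ^ 2 / 2 = L ^ 2 / 8`. The left-hand side is `∫₀ᴸ (f - k) ^ 2`, which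
periodicity moves to `[z, z + L]`.
-/

open MeasureTheory Set Interval

theorem sq_intervalIntegral_le_mul_intervalIntegral_sq {h : ℝ → ℝ} {a b : ℝ} (hab : a ≤ b)
    (hh : IntervalIntegrable h volume a b)
    (hh2 : IntervalIntegrable (fun t => h t ^ 2) volume a b) :
    (∫ t in a..b, h t) ^ 2 ≤ (b - a) * ∫ t in a..b, h t ^ 2 := by
  rcases hab.eq_or_lt with rfl | hlt
  · simp
  have : IsFiniteMeasure (volume.restrict (Ι a b)) := by
    rw [uIoc_of_le hab]; infer_instance
  have : NeZero (volume.restrict (Ι a b)) := ⟨by simp [uIoc_of_le hab, hlt]⟩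
  have jensen : (⨍ t in a..b, h t) ^ 2 ≤ ⨍ t in a..b, h t ^ 2 :=
    even_two.convexOn_pow.map_average_le (continuousOn_pow 2) isClosed_univ
      (by simp) hh.def' hh2.def'
  have hba : 0 < b - a := sub_pos.2 hlt
  rw [interval_average_eq_div, interval_average_eq_div, div_pow,
    div_le_div_iff₀ (by positivity) hba] at jensen
  nlinarith

theorem integral_sub_const_sq {f : ℝ → ℝ} {a b : ℝ} (c : ℝ)
    (hf : IntervalIntegrable f volume a b)
    (hf2 : IntervalIntegrable (fun x => f x ^ 2) volume a b) :
    ∫ x in a..b, (f x - c) ^ 2 =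
      (∫ x in a..b, f x ^ 2) - 2 * c * (∫ x in a..b, f x) + c ^ 2 * (b - a) := by
  have expand : (fun x => (f x - c) ^ 2) = fun x => f x ^ 2 - 2 * c * f x + c ^ 2 := by
    ext x; ring
  rw [expand, intervalIntegral.integral_add (hf2.sub (hf.const_mul _)) intervalIntegrable_const,
    intervalIntegral.integral_sub hf2 (hf.const_mul _), intervalIntegral.integral_const_mul,
    intervalIntegral.integral_const, smul_eq_mul]
  ring

theorem integral_sq_le_of_eq_integral_from_left {g g' : ℝ → ℝ} {a b : ℝ} (hab : a ≤ b)
    (hg : ContinuousOn g (Icc a b)) (hg' : IntervalIntegrable g' volume a b)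
    (hg'2 : IntervalIntegrable (fun t => g' t ^ 2) volume a b)
    (hftc : ∀ x ∈ Icc a b, g x = ∫ t in a..x, g' t) :
    ∫ x in a..b, g x ^ 2 ≤ (b - a) ^ 2 / 2 * ∫ x in a..b, g' x ^ 2 := by
  set A := ∫ x in a..b, g' x ^ 2
  have pointwise : ∀ x ∈ Icc a b, g x ^ 2 ≤ (x - a) * A := fun x hx => by
    have hsub : uIcc a x ⊆ uIcc a b := uIcc_subset_uIcc_left (Icc_subset_uIcc hx)
    rw [hftc x hx]
    calc _ ≤ (x - a) * ∫ t in a..x, g' t ^ 2 :=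
          sq_intervalIntegral_le_mul_intervalIntegral_sq hx.1 (hg'.mono_set hsub)
            (hg'2.mono_set hsub)
      _ ≤ (x - a) * A := by
          gcongr
          · linarith [hx.1]
          · exact intervalIntegral.integral_mono_interval le_rfl hx.1 hx.2
              (Filter.Eventually.of_forall fun t => sq_nonneg _) hg'2
  calc ∫ x in a..b, g x ^ 2 ≤ ∫ x in a..b, (x - a) * A :=
        intervalIntegral.integral_mono_on hab ((hg.pow 2).intervalIntegrable_of_Icc hab)
          ((by fun_prop : Continuous fun x => (x - a) * A).intervalIntegrable _ _) pointwise
    _ = (b - a) ^ 2 / 2 * A := by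
        rw [intervalIntegral.integral_mul_const,
          intervalIntegral.integral_comp_sub_right (fun u => u), integral_id]
        ring

theorem integral_sq_le_of_eq_integral_from_right {g g' : ℝ → ℝ} {a b : ℝ} (hab : a ≤ b)
    (hg : ContinuousOn g (Icc a b)) (hg' : IntervalIntegrable g' volume a b)
    (hg'2 : IntervalIntegrable (fun t => g' t ^ 2) volume a b)
    (hftc : ∀ x ∈ Icc a b, g x = ∫ t in b..x, g' t) :
    ∫ x in a..b, g x ^ 2 ≤ (b - a) ^ 2 / 2 * ∫ x in a..b, g' x ^ 2 := by
  have reflected := integral_sq_le_of_eq_integral_from_left (g := fun x => g (-x))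
    (g' := fun t => -g' (-t)) (a := -b) (b := -a) (neg_le_neg hab) ?_ ?_ ?_ ?_
  · simpa [intervalIntegral.integral_comp_neg (fun x => g x ^ 2),
      intervalIntegral.integral_comp_neg (fun x => g' x ^ 2), neg_add_eq_sub] using reflected
  · exact hg.comp continuous_neg.continuousOn fun x hx =>
      ⟨by linarith [hx.2], by linarith [hx.1]⟩
  · exact ((IntervalIntegrable.iff_comp_neg).mp hg').neg.symm
  · simpa using ((IntervalIntegrable.iff_comp_neg).mp hg'2).symm
  · intro x hx
    rw [hftc (-x) ⟨by linarith [hx.2], by linarith [hx.1]⟩, intervalIntegral.integral_neg,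
      intervalIntegral.integral_comp_neg, neg_neg, intervalIntegral.integral_symm]

theorem integral_sq_le_of_eq_zero_of_eq_zero {g g' : ℝ → ℝ} {a b : ℝ} (hab : a ≤ b)
    (hg : ContinuousOn g (Icc a b)) (hg' : IntervalIntegrable g' volume a b)
    (hg'2 : IntervalIntegrable (fun t => g' t ^ 2) volume a b)
    (hftc : ∀ x ∈ Icc a b, ∀ y ∈ Icc a b, g x - g y = ∫ t in y..x, g' t)
    (ha : g a = 0) (hb : g b = 0) :
    ∫ x in a..b, g x ^ 2 ≤ (b - a) ^ 2 / 8 * ∫ x in a..b, g' x ^ 2 := by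
  have hac : a ≤ (a + b) / 2 := by linarith
  have hcb : (a + b) / 2 ≤ b := by linarith
  set c := (a + b) / 2
  have hsub_left : uIcc a c ⊆ uIcc a b :=
    uIcc_subset_uIcc_left (by simp [uIcc_of_le hab, hac, hcb])
  have hsub_right : uIcc c b ⊆ uIcc a b :=
    uIcc_subset_uIcc_right (by simp [uIcc_of_le hab, hac, hcb])
  have left := integral_sq_le_of_eq_integral_from_left hac (hg.mono (Icc_subset_Icc_right hcb))
    (hg'.mono_set hsub_left) (hg'2.mono_set hsub_left) fun x hx => by
      rw [← sub_zero (g x), ← ha]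
      exact hftc x ⟨hx.1, hx.2.trans hcb⟩ a ⟨le_rfl, hab⟩
  have right := integral_sq_le_of_eq_integral_from_right hcb (hg.mono (Icc_subset_Icc_left hac))
    (hg'.mono_set hsub_right) (hg'2.mono_set hsub_right) fun x hx => by
      rw [← sub_zero (g x), ← hb]
      exact hftc x ⟨hac.trans hx.1, hx.2⟩ b ⟨hab, le_rfl⟩
  have hg2 : IntervalIntegrable (fun x => g x ^ 2) volume a b :=
    (hg.pow 2).intervalIntegrable_of_Icc hab
  rw [← intervalIntegral.integral_add_adjacent_intervals (hg2.mono_set hsub_left)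
      (hg2.mono_set hsub_right),
    ← intervalIntegral.integral_add_adjacent_intervals (hg'2.mono_set hsub_left)
      (hg'2.mono_set hsub_right)]
  rw [show (c - a) ^ 2 / 2 = (b - a) ^ 2 / 8 by ring] at left
  rw [show (b - c) ^ 2 / 2 = (b - a) ^ 2 / 8 by ring] at right
  linarith

theorem poincare_closed_curve_min_general (L : ℝ) (hL : 0 < L) (f f' : ℝ → ℝ)
    (hper : ∀ x, f (x + L) = f x) (hper' : ∀ x, f' (x + L) = f' x)
    (hcont : Continuous f)
    (hf'L2 : MemLp f' 2 (volume.restrict (Set.Ioc (0 : ℝ) L)))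
    (hf : ∀ x y : ℝ, f x - f y = ∫ t in y..x, f' t)
    (k : ℝ) (hk_att : ∃ z, f z = k) :
    (∫ x in (0 : ℝ)..L, (f x) ^ 2) - 2 * k * (∫ x in (0 : ℝ)..L, f x) + k ^ 2 * L
      ≤ L ^ 2 / 8 * ∫ x in (0 : ℝ)..L, (f' x) ^ 2 := by
  obtain ⟨z, rfl⟩ := hk_att
  have hf'_int : ∀ a b, IntervalIntegrable f' volume a b :=
    Function.Periodic.intervalIntegrable₀ hper' hL.ne' <|
      (intervalIntegrable_iff_integrableOn_Ioc_of_le hL.le).2 (hf'L2.integrable one_le_two)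
  have hf'2_per : Function.Periodic (fun t => f' t ^ 2) L := fun x => by simp only [hper']
  have hf'2_int : ∀ a b, IntervalIntegrable (fun t => f' t ^ 2) volume a b :=
    hf'2_per.intervalIntegrable₀ hL.ne' <|
      (intervalIntegrable_iff_integrableOn_Ioc_of_le hL.le).2 hf'L2.integrable_sq
  have hg_per : Function.Periodic (fun x => (f x - f z) ^ 2) L := fun x => by simp only [hper]
  calc (∫ x in (0 : ℝ)..L, f x ^ 2) - 2 * f z * (∫ x in (0 : ℝ)..L, f x) + f z ^ 2 * L
      = ∫ x in (0 : ℝ)..L, (f x - f z) ^ 2 := by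
        rw [integral_sub_const_sq _ (hcont.intervalIntegrable _ _)
          ((hcont.pow 2).intervalIntegrable _ _), sub_zero]
    _ = ∫ x in z..z + L, (f x - f z) ^ 2 := by rw [hg_per.intervalIntegral_add_eq z 0, zero_add]
    _ ≤ (z + L - z) ^ 2 / 8 * ∫ x in z..z + L, f' x ^ 2 :=
        integral_sq_le_of_eq_zero_of_eq_zero (by linarith) (by fun_prop) (hf'_int _ _)
          (hf'2_int _ _) (fun x _ y _ => by rw [sub_sub_sub_cancel_right, hf])
          (sub_self _) (by rw [hper, sub_self])
    _ = L ^ 2 / 8 * ∫ x in (0 : ℝ)..L, f' x ^ 2 := by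
        rw [add_sub_cancel_left, hf'2_per.intervalIntegral_add_eq z 0, zero_add]

/-- If `f : ℝ → ℝ` is `L`-periodic, continuous and locally absolutely
continuous with `L`-periodic derivative `f' ∈ L²(0,L)`, and `k` is the (attained) minimum
of `f`, then `∫₀ᴸ f² - 2k ∫₀ᴸ f + k² L ≤ (L²/8) ∫₀ᴸ (f')²`. -/
theorem poincare_closed_curve_min (L : ℝ) (hL : 0 < L) (f f' : ℝ → ℝ)
    (hper : ∀ x, f (x + L) = f x) (hper' : ∀ x, f' (x + L) = f' x)
    (hcont : Continuous f)
    (hf'L2 : MemLp f' 2 (volume.restrict (Set.Ioc (0 : ℝ) L)))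
    (hf : ∀ x y : ℝ, f x - f y = ∫ t in y..x, f' t)
    (k : ℝ) (hk_le : ∀ x, k ≤ f x) (hk_att : ∃ z, f z = k) :
    (∫ x in (0 : ℝ)..L, (f x) ^ 2) - 2 * k * (∫ x in (0 : ℝ)..L, f x) + k ^ 2 * L
      ≤ L ^ 2 / 8 * ∫ x in (0 : ℝ)..L, (f' x) ^ 2 :=
  poincare_closed_curve_min_general L hL f f' hper hper' hcont hf'L2 hf k hk_att
end

section
/- If f : ∂P → ℝ is continuous, nonnegative, and H¹ on each side of P, and k ≥ 0, then ∫_{∂P} f² dμ ≤ (4/r)·∫_P F(x,y)² dxdy. -/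
open MeasureTheory
open scoped RealInnerProductSpace

/-- The Euclidean plane. -/
abbrev E2 : Type := EuclideanSpace ℝ (Fin 2)

/-- Unit vector pointing from `A` to `B`. -/
noncomputable def uvec (A B : E2) : E2 := (dist A B)⁻¹ • (B - A)

/-- The restriction of `f : ∂P → ℝ` to the side from `A` to `B`, viewed as a function
on `[0, dist A B]` via the arclength parametrization. -/
noncomputable def sideFun (A B : E2) (f : E2 → ℝ) (t : ℝ) : ℝ := f (A + t • uvec A B)

/-- The (signed) distance `d` from `A` to the foot of the altitude from `c` onto the
line through `A` and `B`. -/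
noncomputable def footd (A B c : E2) : ℝ := ⟪c - A, uvec A B⟫

/-- The trianglewise extension `F` on the triangle `conv{A, B, c}`: in Euclidean
coordinates in which `A = (0,0)`, `B = (l,0)` and `c = (d,r)`, it is
`F(x,y) = (1 − y/r)·f((x − (d/r)y)/(1 − y/r)) + (k/r)·y` (and `= k` for `y = r`). -/
noncomputable def triExt (A B c : E2) (r k : ℝ) (f : E2 → ℝ) (p : E2) : ℝ :=
  let u := uvec A B
  let dd := footd A B c
  let nv := r⁻¹ • (c - A - dd • u)
  let X := ⟪p - A, u⟫
  let Y := ⟪p - A, nv⟫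
  if Y = r then k
  else (1 - Y / r) * f (A + ((X - (dd / r) * Y) / (1 - Y / r)) • u) + (k / r) * Y

/-!
On the triangle over a side use orthonormal coordinates `(y, x)`: height above the side and
abscissa along it. Since `f ≥ 0` and `k ≥ 0`, `F² ≥ ((1 - y/r) f(σ))²`, where `σ` is the point of
the side hit by the ray from the incenter through `(y, x)`. The slice of the triangle at height
`y` is an interval of length `(1 - y/r) l` that `σ` maps affinely onto the side, so by Fubini
`∫ ((1 - y/r) f(σ))² = ∫₀^r (1 - y/r)³ dy · ∫ f² = (r/4) ∫ f²`. Summing over the sides gives the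
bound.
-/

open Set

lemma intervalIntegral_mul_comp_sub_div_sq (a c l : ℝ) (φ : ℝ → ℝ) :
    ∫ x in a..a + c * l, (c * φ ((x - a) / c)) ^ 2 = c ^ 3 * ∫ t in 0..l, φ t ^ 2 := by
  rcases eq_or_ne c 0 with rfl | hc
  · simp
  rw [intervalIntegral.integral_comp_sub_right (fun x => (c * φ (x / c)) ^ 2) a, sub_self,
    add_sub_cancel_left, intervalIntegral.integral_comp_div (fun x => (c * φ x) ^ 2) hc,
    zero_div, mul_div_cancel_left₀ _ hc, smul_eq_mul, ← intervalIntegral.integral_const_mul,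
    ← intervalIntegral.integral_const_mul]
  congr 1; ext t; ring

lemma intervalIntegral_one_sub_div_pow_three {r : ℝ} (hr : r ≠ 0) :
    ∫ y in 0..r, (1 - y / r) ^ 3 = r / 4 := by
  rw [intervalIntegral.integral_comp_div (fun t => (1 - t) ^ 3) hr, zero_div, div_self hr,
    intervalIntegral.integral_comp_sub_left (fun t => t ^ 3) 1]
  norm_num [integral_pow]
  ring

lemma orthonormal_normalize_pair {F : Type*} [NormedAddCommGroup F] [InnerProductSpace ℝ F]
    {u w : F} (hu : ‖u‖ = 1) (hw : w ≠ 0) (hwu : ⟪w, u⟫ = 0) :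
    Orthonormal ℝ ![‖w‖⁻¹ • w, u] := by
  have hwu' : ⟪‖w‖⁻¹ • w, u⟫ = 0 := by rw [real_inner_smul_left, hwu, mul_zero]
  rw [orthonormal_iff_ite]
  intro i j
  fin_cases i <;> fin_cases j
  · simp [norm_smul, hw]
  · simpa using hwu'
  · simpa [real_inner_comm] using hwu'
  · simp [hu]

lemma exists_measurableEquiv_orthonormal_coords {e : Fin 2 → E2} (he : Orthonormal ℝ e)
    (A : E2) : ∃ Φ : E2 ≃ᵐ ℝ × ℝ, MeasurePreserving Φ ∧
      ∀ p, Φ p = (⟪p - A, e 0⟫, ⟪p - A, e 1⟫) := by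
  have hcard : Fintype.card (Fin 2) = Module.finrank ℝ E2 := by simp
  let b : OrthonormalBasis (Fin 2) ℝ E2 :=
    (basisOfOrthonormalOfCardEqFinrank he hcard).toOrthonormalBasis
      (by rw [coe_basisOfOrthonormalOfCardEqFinrank]; exact he)
  have hb : ⇑b = e := by simp [b, coe_basisOfOrthonormalOfCardEqFinrank]
  refine ⟨((Homeomorph.addRight (-A)).toMeasurableEquiv.trans b.measurableEquiv).trans
    ((MeasurableEquiv.toLp 2 (Fin 2 → ℝ)).symm.trans MeasurableEquiv.finTwoArrow), ?_, ?_⟩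
  · exact (((volume_preserving_finTwoArrow ℝ).comp
      (EuclideanSpace.volume_preserving_symm_measurableEquiv_toLp (Fin 2))).comp
      b.measurePreserving_measurableEquiv).comp (measurePreserving_add_right volume (-A))
  · intro p
    change (b.repr (p + -A) 0, b.repr (p + -A) 1) = _
    simp only [b.repr_apply_apply, hb, real_inner_comm, sub_eq_add_neg]

lemma setIntegral_convexHull_orthonormal_coords {e : Fin 2 → E2} (he : Orthonormal ℝ e)
    (A : E2) (s : Set E2) (g : ℝ × ℝ → ℝ) :
    ∫ p in convexHull ℝ s, g (⟪p - A, e 0⟫, ⟪p - A, e 1⟫)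
      = ∫ z in convexHull ℝ ((fun p => (⟪p - A, e 0⟫, ⟪p - A, e 1⟫)) '' s), g z := by
  obtain ⟨Φ, hΦ, hΦp⟩ := exists_measurableEquiv_orthonormal_coords he A
  have hΦ' : ⇑Φ = fun p => (⟪p - A, e 0⟫, ⟪p - A, e 1⟫) := funext hΦp
  let L : E2 →ᵃ[ℝ] ℝ × ℝ :=
    ((innerSL ℝ (e 0)).toLinearMap.prod (innerSL ℝ (e 1)).toLinearMap).toAffineMap.comp
      (AffineMap.id ℝ E2 - AffineMap.const ℝ E2 A)
  have hL : ⇑L = Φ := by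
    rw [hΦ']; ext p <;> simp [L, real_inner_comm]
  rw [← hΦ', ← hL, ← L.image_convexHull, hL,
    hΦ.setIntegral_image_emb Φ.measurableEmbedding, hΦ']

def planarTriangle (l d r : ℝ) : Set (ℝ × ℝ) := convexHull ℝ {(0, 0), (0, l), (r, d)}

/-- The abscissa at which the ray from the apex `(r, d)` through `z` meets the base; at the apex
itself the division by zero makes it `0`. -/
noncomputable def baseProj (r d : ℝ) (z : ℝ × ℝ) : ℝ := (z.2 - d / r * z.1) / (1 - z.1 / r)

/-- `triExt` in the coordinates `z = (height above the side, abscissa along it)`. -/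
noncomputable def planarExt (r d k : ℝ) (φ : ℝ → ℝ) (z : ℝ × ℝ) : ℝ :=
  if z.1 = r then k else (1 - z.1 / r) * φ (baseProj r d z) + k / r * z.1

section Planar

variable {l d r k : ℝ} {φ : ℝ → ℝ}

lemma planarTriangle_eq (hl : 0 < l) (hr : 0 < r) :
    planarTriangle l d r
      = {z | z.1 ∈ Icc 0 r ∧ z.2 ∈ Icc (d / r * z.1) (d / r * z.1 + (1 - z.1 / r) * l)} := by
  unfold planarTriangle
  apply Subset.antisymm
  · refine convexHull_min ?_ ?_
    · rintro z (rfl | rfl | rfl) <;> simp [div_mul_cancel₀ _ hr.ne', div_self hr.ne', hl.le, hr.le]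
    · rintro p ⟨⟨hp1, hp2⟩, hp3, hp4⟩ q ⟨⟨hq1, hq2⟩, hq3, hq4⟩ α β hα hβ hαβ
      obtain rfl : β = 1 - α := by linarith
      simp only [mem_ofPred_eq, Prod.smul_fst, Prod.smul_snd, Prod.fst_add, Prod.snd_add,
        smul_eq_mul, mem_Icc]
      refine ⟨⟨by nlinarith, by nlinarith⟩, ?_, ?_⟩
      · calc _ = α * (d / r * p.1) + (1 - α) * (d / r * q.1) := by ring
          _ ≤ _ := add_le_add (mul_le_mul_of_nonneg_left hp3 hα)
            (mul_le_mul_of_nonneg_left hq3 hβ)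
      · calc _ ≤ α * (d / r * p.1 + (1 - p.1 / r) * l)
              + (1 - α) * (d / r * q.1 + (1 - q.1 / r) * l) :=
            add_le_add (mul_le_mul_of_nonneg_left hp4 hα) (mul_le_mul_of_nonneg_left hq4 hβ)
          _ = _ := by ring
  · rintro ⟨y, x⟩ ⟨⟨hy0, hyr⟩, hx1, hx2⟩
    simp only at hy0 hyr hx1 hx2
    -- barycentric coordinates: `y / r` at the apex, `β` at `(0, l)`
    set β := (x - d / r * y) / l
    have hβ : β * l = x - d / r * y := div_mul_cancel₀ _ hl.ne'
    have hβ0 : 0 ≤ β := div_nonneg (by linarith) hl.le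
    have hα0 : 0 ≤ 1 - β - y / r := by nlinarith
    have hmem := (convex_convexHull ℝ ({(0, 0), (0, l), (r, d)} : Set (ℝ × ℝ))).sum_mem
      (t := Finset.univ) (w := ![1 - β - y / r, β, y / r]) (z := ![(0, 0), (0, l), (r, d)])
      (by simp [Fin.forall_fin_succ, hα0, hβ0, div_nonneg hy0 hr.le])
      (by simp [Fin.sum_univ_three]; ring)
      (by simp [Fin.forall_fin_succ, subset_convexHull ℝ _ (mem_insert _ _),
        subset_convexHull ℝ _ (mem_insert_of_mem _ (mem_insert _ _)),
        subset_convexHull ℝ _ (mem_insert_of_mem _ (mem_insert_of_mem _ (mem_singleton _)))])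
    convert hmem using 1
    simp [Fin.sum_univ_three]
    refine ⟨by field_simp, ?_⟩
    rw [hβ]; ring

lemma isCompact_planarTriangle : IsCompact (planarTriangle l d r) :=
  ((finite_singleton _).insert _ |>.insert _).isCompact_convexHull ℝ

lemma fst_mem_Icc_of_mem_planarTriangle (hl : 0 < l) (hr : 0 < r) {z : ℝ × ℝ}
    (hz : z ∈ planarTriangle l d r) : z.1 ∈ Icc 0 r :=
  (planarTriangle_eq hl hr ▸ hz).1

lemma one_sub_fst_div_mem_Icc (hl : 0 < l) (hr : 0 < r) {z : ℝ × ℝ}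
    (hz : z ∈ planarTriangle l d r) : 1 - z.1 / r ∈ Icc 0 1 := by
  obtain ⟨hy0, hyr⟩ := fst_mem_Icc_of_mem_planarTriangle hl hr hz
  constructor
  · rw [sub_nonneg, div_le_one hr]; exact hyr
  · linarith [div_nonneg hy0 hr.le]

lemma baseProj_mem_Icc (hl : 0 < l) (hr : 0 < r) {z : ℝ × ℝ} (hz : z ∈ planarTriangle l d r) :
    baseProj r d z ∈ Icc 0 l := by
  rw [planarTriangle_eq hl hr] at hz
  obtain ⟨⟨hy0, hyr⟩, hx1, hx2⟩ := hz
  rcases hyr.lt_or_eq with hyr | rfl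
  · have hc : 0 < 1 - z.1 / r := by rw [sub_pos, div_lt_one hr]; exact hyr
    rw [baseProj, mem_Icc, div_le_iff₀ hc]
    exact ⟨div_nonneg (by linarith) hc.le, by linarith⟩
  · simp [baseProj, div_self hr.ne', hl.le]

@[fun_prop]
lemma measurable_baseProj : Measurable (baseProj r d) := by
  unfold baseProj; fun_prop

lemma integrableOn_planarTriangle {g : ℝ × ℝ → ℝ} (hg : Measurable g) {C : ℝ}
    (hC : ∀ z ∈ planarTriangle l d r, |g z| ≤ C) : IntegrableOn g (planarTriangle l d r) :=
  Measure.integrableOn_of_bounded isCompact_planarTriangle.measure_lt_top.ne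
    hg.aestronglyMeasurable
    ((ae_restrict_iff' isCompact_planarTriangle.measurableSet).2 (ae_of_all _ hC))

lemma exists_bound_comp_baseProj (hl : 0 < l) (hr : 0 < r) (hφ : ContinuousOn φ (Icc 0 l)) :
    ∃ M, ∀ z ∈ planarTriangle l d r, |φ (baseProj r d z)| ≤ M := by
  obtain ⟨M, hM⟩ := isCompact_Icc.exists_bound_of_continuousOn hφ
  exact ⟨M, fun z hz => hM _ (baseProj_mem_Icc hl hr hz)⟩

lemma setIntegral_Icc_slice_sq (hl : 0 ≤ l) (hr : 0 < r) {y : ℝ} (hy : y ∈ Icc 0 r) :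
    ∫ x in Icc (d / r * y) (d / r * y + (1 - y / r) * l),
        ((1 - y / r) * φ (baseProj r d (y, x))) ^ 2
      = (1 - y / r) ^ 3 * ∫ t in 0..l, φ t ^ 2 := by
  have hc : 0 ≤ 1 - y / r := by rw [sub_nonneg, div_le_one hr]; exact hy.2
  rw [integral_Icc_eq_integral_Ioc,
    ← intervalIntegral.integral_of_le (le_add_of_nonneg_right (mul_nonneg hc hl))]
  exact intervalIntegral_mul_comp_sub_div_sq _ _ _ φ

lemma integrableOn_sq_mul_comp_baseProj (hl : 0 < l) (hr : 0 < r) (hφ : Continuous φ) :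
    IntegrableOn (fun z => ((1 - z.1 / r) * φ (baseProj r d z)) ^ 2) (planarTriangle l d r) := by
  obtain ⟨M, hM⟩ := exists_bound_comp_baseProj (d := d) hl hr hφ.continuousOn
  refine integrableOn_planarTriangle (by fun_prop) (C := M ^ 2) fun z hz => ?_
  obtain ⟨hc0, hc1⟩ := one_sub_fst_div_mem_Icc hl hr hz
  obtain ⟨hφ1, hφ2⟩ := abs_le.1 (hM z hz)
  rw [abs_of_nonneg (sq_nonneg _), mul_pow]
  calc _ ≤ 1 * M ^ 2 :=
        mul_le_mul (pow_le_one₀ hc0 hc1) (sq_le_sq' hφ1 hφ2) (sq_nonneg _) zero_le_one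
    _ = M ^ 2 := one_mul _

lemma setIntegral_planarTriangle_sq (hl : 0 < l) (hr : 0 < r) (hφ : Continuous φ) :
    ∫ z in planarTriangle l d r, ((1 - z.1 / r) * φ (baseProj r d z)) ^ 2
      = r / 4 * ∫ t in 0..l, φ t ^ 2 := by
  set h : ℝ × ℝ → ℝ := fun z => ((1 - z.1 / r) * φ (baseProj r d z)) ^ 2
  have hT := isCompact_planarTriangle (l := l) (d := d) (r := r)
  have hslice : ∀ y, ∫ x, (planarTriangle l d r).indicator h (y, x)
      = (Icc 0 r).indicator (fun y => (1 - y / r) ^ 3 * ∫ t in 0..l, φ t ^ 2) y := by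
    intro y
    by_cases hy : y ∈ Icc 0 r
    · rw [indicator_of_mem hy, ← setIntegral_Icc_slice_sq (d := d) hl.le hr hy,
        ← integral_indicator measurableSet_Icc]
      congr 1; ext x
      simp [planarTriangle_eq hl hr, indicator_apply, hy.1, hy.2, h]
    · have hyT : ∀ x, (y, x) ∉ planarTriangle l d r := fun x hx =>
        hy (planarTriangle_eq hl hr ▸ hx).1
      simp [indicator_of_notMem hy, indicator_of_notMem (hyT _)]
  rw [← integral_indicator hT.measurableSet, Measure.volume_eq_prod,
    integral_prod _ ((integrable_indicator_iff hT.measurableSet).2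
      (integrableOn_sq_mul_comp_baseProj hl hr hφ)),
    integral_congr_ae (ae_of_all _ hslice), integral_indicator measurableSet_Icc,
    integral_Icc_eq_integral_Ioc, ← intervalIntegral.integral_of_le hr.le,
    intervalIntegral.integral_mul_const, intervalIntegral_one_sub_div_pow_three hr.ne']

lemma planarExt_eqOn_of_eqOn (hl : 0 < l) (hr : 0 < r) {ψ : ℝ → ℝ} (h : EqOn φ ψ (Icc 0 l)) :
    EqOn (planarExt r d k φ) (planarExt r d k ψ) (planarTriangle l d r) := fun z hz => by
  simp only [planarExt, h (baseProj_mem_Icc hl hr hz)]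

lemma integrableOn_planarExt_sq (hl : 0 < l) (hr : 0 < r) (hφ : Continuous φ) :
    IntegrableOn (fun z => planarExt r d k φ z ^ 2) (planarTriangle l d r) := by
  obtain ⟨M, hM⟩ := exists_bound_comp_baseProj (d := d) hl hr hφ.continuousOn
  have hmeas : Measurable (planarExt r d k φ) :=
    Measurable.ite (measurableSet_singleton r |>.preimage measurable_fst) measurable_const
      (by fun_prop)
  refine integrableOn_planarTriangle (by fun_prop) (C := (M + |k|) ^ 2) fun z hz => ?_
  obtain ⟨hc0, hc1⟩ := one_sub_fst_div_mem_Icc hl hr hz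
  obtain ⟨hy0, hyr⟩ := fst_mem_Icc_of_mem_planarTriangle hl hr hz
  have hM0 : 0 ≤ M := (abs_nonneg _).trans (hM z hz)
  have hext : |planarExt r d k φ z| ≤ M + |k| := by
    rw [planarExt]
    split_ifs
    · linarith
    · calc _ ≤ |(1 - z.1 / r) * φ (baseProj r d z)| + |k / r * z.1| := abs_add_le _ _
        _ ≤ 1 * M + |k| * 1 := by
          rw [abs_mul, abs_mul, abs_of_nonneg hc0, abs_div, abs_of_pos hr, abs_of_nonneg hy0,
            mul_comm_div]
          gcongr
          exacts [hM z hz, (div_le_one hr).2 hyr]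
        _ = M + |k| := by ring
  rw [abs_pow]
  exact pow_le_pow_left₀ (abs_nonneg _) hext 2

lemma sq_le_planarExt_sq (hl : 0 < l) (hr : 0 < r) (hk : 0 ≤ k) (hφ : ∀ t ∈ Icc 0 l, 0 ≤ φ t)
    {z : ℝ × ℝ} (hz : z ∈ planarTriangle l d r) :
    ((1 - z.1 / r) * φ (baseProj r d z)) ^ 2 ≤ planarExt r d k φ z ^ 2 := by
  by_cases hzr : z.1 = r
  · simp [hzr, div_self hr.ne', planarExt, sq_nonneg]
  · rw [planarExt, if_neg hzr]
    have ha := mul_nonneg (one_sub_fst_div_mem_Icc hl hr hz).1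
      (hφ _ (baseProj_mem_Icc hl hr hz))
    have hb : 0 ≤ k / r * z.1 :=
      mul_nonneg (div_nonneg hk hr.le) (fst_mem_Icc_of_mem_planarTriangle hl hr hz).1
    exact pow_le_pow_left₀ ha (le_add_of_nonneg_right hb) 2

lemma mul_integral_sq_le_setIntegral_planarExt_sq (hl : 0 < l) (hr : 0 < r) (hk : 0 ≤ k)
    (hφ : ContinuousOn φ (Icc 0 l)) (hφ0 : ∀ t ∈ Icc 0 l, 0 ≤ φ t) :
    r / 4 * ∫ t in 0..l, φ t ^ 2 ≤ ∫ z in planarTriangle l d r, planarExt r d k φ z ^ 2 := by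
  -- a continuous extension of `φ` off `[0, l]` makes the integrands measurable and
  -- does not change them on the triangle
  set ψ := IccExtend hl.le ((Icc 0 l).domRestrict φ)
  have hψ : Continuous ψ := (continuousOn_iff_continuous_domRestrict.1 hφ).Icc_extend'
  have hφψ : EqOn φ ψ (Icc 0 l) := fun t ht =>
    (IccExtend_of_mem hl.le ((Icc 0 l).domRestrict φ) ht).symm
  have hψ0 : ∀ t ∈ Icc 0 l, 0 ≤ ψ t := fun t ht => hφψ ht ▸ hφ0 t ht
  have hT := isCompact_planarTriangle (l := l) (d := d) (r := r)
  calc r / 4 * ∫ t in 0..l, φ t ^ 2 = r / 4 * ∫ t in 0..l, ψ t ^ 2 := by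
        rw [intervalIntegral.integral_congr fun t ht => by
          rw [hφψ (uIcc_of_le hl.le ▸ ht : t ∈ Icc 0 l)]]
    _ = ∫ z in planarTriangle l d r, ((1 - z.1 / r) * ψ (baseProj r d z)) ^ 2 :=
        (setIntegral_planarTriangle_sq hl hr hψ).symm
    _ ≤ ∫ z in planarTriangle l d r, planarExt r d k ψ z ^ 2 :=
        setIntegral_mono_on (integrableOn_sq_mul_comp_baseProj hl hr hψ)
          (integrableOn_planarExt_sq hl hr hψ) hT.measurableSet
          fun z hz => sq_le_planarExt_sq hl hr hk hψ0 hz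
    _ = ∫ z in planarTriangle l d r, planarExt r d k φ z ^ 2 :=
        setIntegral_congr_fun hT.measurableSet fun z hz => by
          simp only [planarExt_eqOn_of_eqOn hl hr hφψ hz]

end Planar

section Side

variable {A B c : E2} {r k : ℝ} {f : E2 → ℝ}

lemma norm_uvec (hAB : A ≠ B) : ‖uvec A B‖ = 1 := by
  rw [uvec, norm_smul, norm_inv, Real.norm_of_nonneg dist_nonneg, ← dist_eq_norm',
    inv_mul_cancel₀ (dist_pos.2 hAB).ne']

lemma sub_eq_dist_smul_uvec (hAB : A ≠ B) : B - A = dist A B • uvec A B := by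
  rw [uvec, smul_smul, mul_inv_cancel₀ (dist_pos.2 hAB).ne', one_smul]

lemma inner_sub_footd_smul_uvec (hAB : A ≠ B) (c : E2) :
    ⟪c - A - footd A B c • uvec A B, uvec A B⟫ = 0 := by
  rw [inner_sub_left, real_inner_smul_left, real_inner_self_eq_norm_sq, norm_uvec hAB, footd]
  ring

lemma add_smul_uvec_mem_segment (hAB : A ≠ B) {t : ℝ} (ht : t ∈ Icc 0 (dist A B)) :
    A + t • uvec A B ∈ segment ℝ A B := by
  have hl := dist_pos.2 hAB
  rw [segment_eq_image']
  refine ⟨t / dist A B, ⟨div_nonneg ht.1 hl.le, (div_le_one hl).2 ht.2⟩, ?_⟩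
  rw [sub_eq_dist_smul_uvec hAB]
  dsimp only
  rw [smul_smul, div_mul_cancel₀ _ hl.ne']

lemma continuousOn_sideFun (hAB : A ≠ B) (hf : ContinuousOn f (segment ℝ A B)) :
    ContinuousOn (sideFun A B f) (Icc 0 (dist A B)) :=
  hf.comp (by fun_prop) fun _ ht => add_smul_uvec_mem_segment hAB ht

lemma setIntegral_convexHull_triExt_sq (hAB : A ≠ B) (hr : 0 < r)
    (hfoot : ‖c - A - footd A B c • uvec A B‖ = r) (k : ℝ) (f : E2 → ℝ) :
    ∫ p in convexHull ℝ {A, B, c}, triExt A B c r k f p ^ 2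
      = ∫ z in planarTriangle (dist A B) (footd A B c) r,
          planarExt r (footd A B c) k (sideFun A B f) z ^ 2 := by
  set u := uvec A B
  set w := c - A - footd A B c • u
  have hw : w ≠ 0 := norm_pos_iff.1 (hfoot ▸ hr)
  have hwu : ⟪w, u⟫ = 0 := inner_sub_footd_smul_uvec hAB c
  have he : Orthonormal ℝ ![r⁻¹ • w, u] :=
    hfoot ▸ orthonormal_normalize_pair (norm_uvec hAB) hw hwu
  have huu : ⟪u, u⟫ = 1 := by rw [real_inner_self_eq_norm_sq, norm_uvec hAB, one_pow]
  have hww : ⟪w, w⟫ = r ^ 2 := by rw [real_inner_self_eq_norm_sq, hfoot]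
  have hBA : B - A = dist A B • u := sub_eq_dist_smul_uvec hAB
  have hcA : c - A = w + footd A B c • u := by simp [w]
  have hvertices : (fun p => (⟪p - A, ![r⁻¹ • w, u] 0⟫, ⟪p - A, ![r⁻¹ • w, u] 1⟫)) '' {A, B, c}
      = {(0, 0), (0, dist A B), (r, footd A B c)} := by
    simp only [image_insert_eq, image_singleton, Matrix.cons_val_zero, Matrix.cons_val_one,
      sub_self, inner_zero_left, hBA, hcA, inner_add_left, real_inner_smul_left,
      real_inner_smul_right, real_inner_comm w u, hwu, huu, hww, mul_zero, add_zero,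
      zero_add, mul_one, sq, inv_mul_cancel_left₀ hr.ne']
  exact (setIntegral_convexHull_orthonormal_coords he A _
    (fun z => planarExt r (footd A B c) k (sideFun A B f) z ^ 2)).trans (by rw [hvertices]; rfl)

lemma integral_sideFun_sq_le (hAB : A ≠ B) (hr : 0 < r)
    (hfoot : ‖c - A - footd A B c • uvec A B‖ = r) (hf : ContinuousOn f (segment ℝ A B))
    (hf0 : ∀ p ∈ segment ℝ A B, 0 ≤ f p) (hk : 0 ≤ k) :
    ∫ t in 0..dist A B, sideFun A B f t ^ 2
      ≤ 4 / r * ∫ p in convexHull ℝ {A, B, c}, triExt A B c r k f p ^ 2 := by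
  rw [setIntegral_convexHull_triExt_sq hAB hr hfoot]
  calc _ = 4 / r * (r / 4 * ∫ t in 0..dist A B, sideFun A B f t ^ 2) := by field_simp
    _ ≤ _ := by
      gcongr
      exact mul_integral_sq_le_setIntegral_planarExt_sq (dist_pos.2 hAB) hr hk
        (continuousOn_sideFun hAB hf) fun t ht => hf0 _ (add_smul_uvec_mem_segment hAB ht)

end Side

theorem polygon_boundary_L2_bound_general (n : ℕ) [NeZero n] (v : Fin n → E2) (c : E2)
    (r : ℝ) (hr : 0 < r)
    (hside : ∀ i : Fin n, v i ≠ v (i + 1))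
    (hfoot : ∀ i : Fin n, ‖c - v i - footd (v i) (v (i + 1)) c • uvec (v i) (v (i + 1))‖ = r)
    (f : E2 → ℝ)
    (hf_cont : ContinuousOn f (⋃ i, segment ℝ (v i) (v (i + 1))))
    (hf_nonneg : ∀ p ∈ ⋃ i, segment ℝ (v i) (v (i + 1)), 0 ≤ f p)
    (k : ℝ) (hk : 0 ≤ k) :
    ∑ i : Fin n, ∫ t in (0 : ℝ)..dist (v i) (v (i + 1)), (sideFun (v i) (v (i + 1)) f t) ^ 2
      ≤ 4 / r * ∑ i : Fin n,
          ∫ p in convexHull ℝ {v i, v (i + 1), c}, (triExt (v i) (v (i + 1)) c r k f p) ^ 2 := by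
  rw [Finset.mul_sum]
  refine Finset.sum_le_sum fun i _ => ?_
  have hsub := subset_iUnion (fun j => segment ℝ (v j) (v (j + 1))) i
  exact integral_sideFun_sq_le (hside i) hr (hfoot i) (hf_cont.mono hsub)
    (fun p hp => hf_nonneg p (hsub hp)) hk

/-- Let `P` be a convex compact polygon with vertices `v 0, …, v (n-1)`
and inscribed circle of center `c` and radius `r > 0` tangent to every side.  If
`f : ∂P → ℝ` is continuous, nonnegative and `H¹` on each side (with weak derivatives
`D i` on side `i`), and `k ≥ 0`, then `∫_{∂P} f² dμ ≤ (4/r)·∫_P F² dxdy`, where both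
integrals are computed sidewise resp. trianglewise (`P` being the union of the triangles
`Δ_i = conv{v i, v (i+1), c}` and `∂P` the union of the sides). -/
theorem polygon_boundary_L2_bound (n : ℕ) [NeZero n] (hn : 3 ≤ n) (v : Fin n → E2) (c : E2)
    (r : ℝ) (hr : 0 < r)
    (hside : ∀ i : Fin n, v i ≠ v (i + 1))
    (hball : Metric.closedBall c r ⊆ convexHull ℝ (Set.range v))
    (hbdry : frontier (convexHull ℝ (Set.range v)) = ⋃ i, segment ℝ (v i) (v (i + 1)))
    (hfoot : ∀ i : Fin n, ‖c - v i - footd (v i) (v (i + 1)) c • uvec (v i) (v (i + 1))‖ = r)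
    (htang : ∀ i : Fin n, ∃ p ∈ segment ℝ (v i) (v (i + 1)), dist c p = r)
    (f : E2 → ℝ)
    (hf_cont : ContinuousOn f (⋃ i, segment ℝ (v i) (v (i + 1))))
    (hf_nonneg : ∀ p ∈ ⋃ i, segment ℝ (v i) (v (i + 1)), 0 ≤ f p)
    (D : Fin n → ℝ → ℝ)
    (hH1 : ∀ i : Fin n, ∀ t ∈ Set.Icc (0 : ℝ) (dist (v i) (v (i + 1))),
      sideFun (v i) (v (i + 1)) f t
        = sideFun (v i) (v (i + 1)) f 0 + ∫ s in (0 : ℝ)..t, D i s)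
    (hD2 : ∀ i : Fin n,
      MemLp (D i) 2 (volume.restrict (Set.Ioc (0 : ℝ) (dist (v i) (v (i + 1))))))
    (k : ℝ) (hk : 0 ≤ k) :
    ∑ i : Fin n, ∫ t in (0 : ℝ)..dist (v i) (v (i + 1)), (sideFun (v i) (v (i + 1)) f t) ^ 2
      ≤ 4 / r * ∑ i : Fin n,
          ∫ p in convexHull ℝ {v i, v (i + 1), c}, (triExt (v i) (v (i + 1)) c r k f p) ^ 2 :=
  polygon_boundary_L2_bound_general n v c r hr hside hfoot f hf_cont hf_nonneg k hk
end
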